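/- arXiv:2209.14859 — 7 statements merged into one kernel-verified Lean document; each statement's English description precedes it below -/
import Mathlib

section
/- Spectrum of the covariance matrix in the dependent example: Let n ≥ 2 be an integer and s > 0. Let Σ be the n²×n² real matrix indexed by ordered pairs (i,j) ∈ [n]², with entries Σ_{(i,j),(k,l)} = s²·(δ_{ik} + δ_{il} + δ_{jk} + δ_{jl}), where δ is the Kronecker delta (this is the covariance matrix of the random matrix W with W_{i,j} = ξ_i + ξ_j for i.i.d. ξ_v ~ N(0,s²)). Then Σ is symmetric positive semidefinite of rank n; its nonzero eigenvalues are 2ns² with multiplicity n − 1 and 4ns² with multiplicity 1; and the vector (1/n, …, 1/n)ᵗ ∈ ℝ^{n²} is an eigenvector of Σ with eigenvalue 4ns². -/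
/-!
Writing `(C g)_{(i,j)} = g_i + g_j` for `C : ℝⁿ → ℝ^{n²}`, one has `Σ = s² C Cᵀ`. Hence `Σ` is
positive semidefinite of rank `rank C = n`. For `μ ≠ 0`, `C` maps the `μ`-eigenspace of the
Gram matrix `s² CᵀC` isomorphically onto the `μ`-eigenspace of `Σ`, and
`s² CᵀC g = s² (2n g + 2 (∑ g) 𝟙)`: its eigenspaces are `{∑ g = 0}` for `2ns²` and `ℝ 𝟙` for
`4ns²`.
-/

open Matrix

noncomputable section

def SigmaEx (n : ℕ) (s : ℝ) : Matrix (Fin n × Fin n) (Fin n × Fin n) ℝ :=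
  fun q r => s ^ 2 * ((if q.1 = r.1 then (1 : ℝ) else 0) + (if q.1 = r.2 then 1 else 0)
    + (if q.2 = r.1 then 1 else 0) + (if q.2 = r.2 then 1 else 0))

open Module

section CompComm

open Module.End

variable {K V W : Type*} [Field K] [AddCommGroup V] [Module K V] [AddCommGroup W] [Module K W]
  (f : V →ₗ[K] W) (g : W →ₗ[K] V) {μ : K}

theorem eigenspace_comp_eq_map (hμ : μ ≠ 0) :
    eigenspace (f ∘ₗ g) μ = (eigenspace (g ∘ₗ f) μ).map f := by
  ext x
  simp only [Submodule.mem_map, mem_eigenspace_iff, LinearMap.comp_apply]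
  constructor
  · intro hx
    refine ⟨μ⁻¹ • g x, ?_, ?_⟩
    · rw [map_smul, map_smul, hx, map_smul, smul_comm]
    · rw [map_smul, hx, inv_smul_smul₀ hμ]
  · rintro ⟨v, hv, rfl⟩
    rw [hv, map_smul]

theorem finrank_eigenspace_comp_comm (hμ : μ ≠ 0) :
    finrank K (eigenspace (f ∘ₗ g) μ) = finrank K (eigenspace (g ∘ₗ f) μ) := by
  have hinj : Function.Injective (f.domRestrict (eigenspace (g ∘ₗ f) μ)) := by
    rw [← LinearMap.ker_eq_bot, LinearMap.ker_eq_bot']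
    rintro ⟨v, hv⟩ hfv
    rw [mem_eigenspace_iff, LinearMap.comp_apply] at hv
    simp only [LinearMap.domRestrict_apply] at hfv
    rw [hfv, map_zero, eq_comm, smul_eq_zero] at hv
    simpa using hv.resolve_left hμ
  rw [eigenspace_comp_eq_map f g hμ, ← LinearMap.range_domRestrict,
    LinearMap.finrank_range_of_inj hinj]

theorem hasEigenvalue_comp_comm (hμ : μ ≠ 0) (h : HasEigenvalue (f ∘ₗ g) μ) :
    HasEigenvalue (g ∘ₗ f) μ := by
  rw [hasEigenvalue_iff, eigenspace_comp_eq_map f g hμ] at h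
  exact hasEigenvalue_iff.mpr fun h0 => h (by rw [h0, Submodule.map_bot])

end CompComm

def pairSum (n : ℕ) : Matrix (Fin n × Fin n) (Fin n) ℝ :=
  of fun p v => (if p.1 = v then 1 else 0) + (if p.2 = v then 1 else 0)

def sigmaGram (n : ℕ) (s : ℝ) : Matrix (Fin n) (Fin n) ℝ :=
  s ^ 2 • (pairSum n)ᵀ * pairSum n

section Factorization

variable {n : ℕ} {s : ℝ}

theorem pairSum_mulVec (g : Fin n → ℝ) : pairSum n *ᵥ g = fun p => g p.1 + g p.2 := by
  ext p
  simp [pairSum, mulVec, dotProduct, add_mul, Finset.sum_add_distrib]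

theorem transpose_pairSum_mulVec (x : Fin n × Fin n → ℝ) :
    (pairSum n)ᵀ *ᵥ x = fun v => ∑ j, x (v, j) + ∑ i, x (i, v) := by
  ext v
  simp only [mulVec, dotProduct, pairSum, transpose_apply, of_apply, add_mul, ite_mul, one_mul,
    zero_mul, Finset.sum_add_distrib, Fintype.sum_prod_type, Finset.sum_ite_eq', Finset.mem_univ,
    ↓reduceIte, add_left_inj]
  rw [Finset.sum_comm]
  simp

theorem pairSum_mulVecLin_injective : Function.Injective (pairSum n).mulVecLin := by
  intro g h hgh
  ext v
  have := congrFun hgh (v, v)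
  simp only [mulVecLin_apply, pairSum_mulVec] at this
  linarith

theorem rank_pairSum : (pairSum n).rank = n := by
  rw [rank, LinearMap.finrank_range_of_inj pairSum_mulVecLin_injective, finrank_fin_fun]

theorem sigmaEx_eq_smul_pairSum_mul_transpose :
    SigmaEx n s = s ^ 2 • (pairSum n * (pairSum n)ᵀ) := by
  ext p q
  simp only [SigmaEx, eq_comm, mul_add, mul_ite, mul_one, mul_zero, pairSum, Matrix.smul_apply,
    Matrix.mul_apply, of_apply, transpose_apply, Finset.sum_add_distrib, Finset.sum_ite_eq',
    Finset.mem_univ, ↓reduceIte, smul_eq_mul]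
  ring

theorem sigmaGram_mulVec (g : Fin n → ℝ) :
    sigmaGram n s *ᵥ g = fun v => s ^ 2 * (2 * n * g v + 2 * ∑ w, g w) := by
  rw [sigmaGram, ← mulVec_mulVec, smul_mulVec, pairSum_mulVec, transpose_pairSum_mulVec]
  ext v
  simp only [Pi.smul_apply, smul_eq_mul, Finset.sum_add_distrib, Finset.sum_const,
    Finset.card_univ, Fintype.card_fin, nsmul_eq_mul]
  ring

theorem mulVecLin_sigmaEx :
    (SigmaEx n s).mulVecLin = (pairSum n).mulVecLin ∘ₗ (s ^ 2 • (pairSum n)ᵀ).mulVecLin := by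
  rw [← mulVecLin_mul, sigmaEx_eq_smul_pairSum_mul_transpose, Matrix.mul_smul]

theorem mulVecLin_sigmaGram :
    (sigmaGram n s).mulVecLin = (s ^ 2 • (pairSum n)ᵀ).mulVecLin ∘ₗ (pairSum n).mulVecLin :=
  mulVecLin_mul _ _

theorem posSemidef_sigmaEx : (SigmaEx n s).PosSemidef := by
  rw [sigmaEx_eq_smul_pairSum_mul_transpose, ← conjTranspose_eq_transpose_of_trivial]
  exact (posSemidef_self_mul_conjTranspose _).smul (sq_nonneg s)

theorem rank_sigmaEx (hs : s ≠ 0) : (SigmaEx n s).rank = n := by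
  rw [sigmaEx_eq_smul_pairSum_mul_transpose,
    rank_smul_of_mem_nonZeroDivisors _ (mem_nonZeroDivisors_of_ne_zero (pow_ne_zero 2 hs)),
    rank_self_mul_transpose, rank_pairSum]

theorem sigmaEx_mulVec_const (c : ℝ) :
    SigmaEx n s *ᵥ (fun _ => c) = (4 * n * s ^ 2) • fun _ => c := by
  rw [sigmaEx_eq_smul_pairSum_mul_transpose, smul_mulVec, ← mulVec_mulVec,
    transpose_pairSum_mulVec, pairSum_mulVec]
  ext p
  simp only [Finset.sum_const, Finset.card_univ, Fintype.card_fin, nsmul_eq_mul, Pi.smul_apply,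
    smul_eq_mul]
  ring

end Factorization

def coordSum (n : ℕ) : Dual ℝ (Fin n → ℝ) := ∑ i, LinearMap.proj i

@[simp]
theorem coordSum_apply {n : ℕ} (g : Fin n → ℝ) : coordSum n g = ∑ i, g i := by
  simp [coordSum]

theorem finrank_ker_coordSum {n : ℕ} (hn : n ≠ 0) :
    finrank ℝ (LinearMap.ker (coordSum n)) = n - 1 := by
  have hne : coordSum n ≠ 0 := fun h => by
    simpa [hn] using LinearMap.congr_fun h fun _ => 1
  have := Dual.finrank_ker_add_one_of_ne_zero hne
  rw [finrank_fin_fun] at this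
  omega

section Eigenspaces

open Module.End

variable {n : ℕ} {s μ : ℝ}

theorem finrank_eigenspace_sigmaEx (hμ : μ ≠ 0) :
    finrank ℝ (eigenspace (SigmaEx n s).mulVecLin μ)
      = finrank ℝ (eigenspace (sigmaGram n s).mulVecLin μ) := by
  rw [mulVecLin_sigmaEx, mulVecLin_sigmaGram]
  exact finrank_eigenspace_comp_comm _ _ hμ

theorem hasEigenvalue_sigmaGram_of_sigmaEx (hμ : μ ≠ 0)
    (h : HasEigenvalue (SigmaEx n s).mulVecLin μ) : HasEigenvalue (sigmaGram n s).mulVecLin μ := by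
  rw [mulVecLin_sigmaEx] at h
  rw [mulVecLin_sigmaGram]
  exact hasEigenvalue_comp_comm _ _ hμ h

theorem mem_eigenspace_sigmaGram_iff {g : Fin n → ℝ} :
    g ∈ eigenspace (sigmaGram n s).mulVecLin μ
      ↔ ∀ v, s ^ 2 * (2 * n * g v + 2 * ∑ w, g w) = μ * g v := by
  rw [mem_eigenspace_iff, mulVecLin_apply, sigmaGram_mulVec, funext_iff]
  rfl

theorem eigenspace_sigmaGram_two_mul (hs : s ≠ 0) (hn : n ≠ 0) :
    eigenspace (sigmaGram n s).mulVecLin (2 * n * s ^ 2) = LinearMap.ker (coordSum n) := by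
  ext g
  rw [mem_eigenspace_sigmaGram_iff, LinearMap.mem_ker, coordSum_apply]
  constructor
  · intro h
    have : 2 * s ^ 2 * ∑ w, g w = 0 := by linear_combination h ⟨0, Nat.pos_of_ne_zero hn⟩
    simpa [hs] using this
  · intro h v
    rw [h]
    ring

theorem eigenspace_sigmaGram_four_mul (hs : s ≠ 0) (hn : n ≠ 0) :
    eigenspace (sigmaGram n s).mulVecLin (4 * n * s ^ 2) = ℝ ∙ fun _ => 1 := by
  ext g
  rw [mem_eigenspace_sigmaGram_iff, Submodule.mem_span_singleton]
  constructor
  · intro h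
    refine ⟨(∑ w, g w) / n, funext fun v => ?_⟩
    have : (n : ℝ) * g v = ∑ w, g w := by
      apply mul_left_cancel₀ (by positivity : (2 * s ^ 2 : ℝ) ≠ 0)
      linear_combination -(h v)
    rw [Pi.smul_apply, smul_eq_mul, mul_one, ← this]
    field_simp
  · rintro ⟨c, rfl⟩ v
    simp only [Pi.smul_apply, smul_eq_mul, mul_one, Finset.sum_const, Finset.card_univ,
      Fintype.card_fin, nsmul_eq_mul]
    ring

theorem eq_of_hasEigenvalue_sigmaGram (h : HasEigenvalue (sigmaGram n s).mulVecLin μ) :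
    μ = 2 * n * s ^ 2 ∨ μ = 4 * n * s ^ 2 := by
  obtain ⟨g, hg, hne⟩ := h.exists_hasEigenvector
  rw [mem_eigenspace_sigmaGram_iff] at hg
  have hsum : (μ - 4 * n * s ^ 2) * ∑ w, g w = 0 := by
    have := Finset.sum_congr rfl fun v (_ : v ∈ Finset.univ) => hg v
    simp only [mul_add, Finset.sum_add_distrib, ← Finset.mul_sum, Finset.sum_const,
      Finset.card_univ, Fintype.card_fin, nsmul_eq_mul] at this
    linear_combination -this
  rcases mul_eq_zero.mp hsum with h4 | hS
  · exact .inr (by linarith)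
  obtain ⟨v, hv⟩ := Function.ne_iff.mp hne
  left
  apply mul_right_cancel₀ hv
  linear_combination -(hg v) + 2 * s ^ 2 * hS

end Eigenspaces

/-- Spectrum of the covariance matrix in the dependent example: `Σ` is symmetric
positive semidefinite of rank `n`; its nonzero eigenvalues are `2ns²` with
multiplicity `n − 1` and `4ns²` with multiplicity `1` (multiplicity = dimension of
the eigenspace, and there are no other nonzero eigenvalues); and the vector
`(1/n, …, 1/n)ᵗ ∈ ℝ^{n²}` is an eigenvector with eigenvalue `4ns²`. -/
theorem stmt_11 (n : ℕ) (hn : 2 ≤ n) (s : ℝ) (hs : 0 < s) :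
    (SigmaEx n s).PosSemidef ∧
    (SigmaEx n s).rank = n ∧
    Module.finrank ℝ
        (Module.End.eigenspace (Matrix.mulVecLin (SigmaEx n s)) (2 * n * s ^ 2))
      = n - 1 ∧
    Module.finrank ℝ
        (Module.End.eigenspace (Matrix.mulVecLin (SigmaEx n s)) (4 * n * s ^ 2))
      = 1 ∧
    (∀ μ : ℝ, Module.End.HasEigenvalue (Matrix.mulVecLin (SigmaEx n s)) μ →
      μ = 0 ∨ μ = 2 * n * s ^ 2 ∨ μ = 4 * n * s ^ 2) ∧
    (SigmaEx n s) *ᵥ (fun _ : Fin n × Fin n => 1 / (n : ℝ))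
      = (4 * n * s ^ 2) • (fun _ : Fin n × Fin n => 1 / (n : ℝ)) := by
  have hs0 : s ≠ 0 := hs.ne'
  have hn0 : n ≠ 0 := by omega
  refine ⟨posSemidef_sigmaEx, rank_sigmaEx hs0, ?_, ?_, fun μ hμ => ?_, sigmaEx_mulVec_const _⟩
  · rw [finrank_eigenspace_sigmaEx (by positivity), eigenspace_sigmaGram_two_mul hs0 hn0,
      finrank_ker_coordSum hn0]
  · rw [finrank_eigenspace_sigmaEx (by positivity), eigenspace_sigmaGram_four_mul hs0 hn0]
    exact finrank_span_singleton fun h => by simpa using congrFun h ⟨0, by omega⟩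
  · rcases eq_or_ne μ 0 with h0 | h0
    · exact .inl h0
    · exact .inr (eq_of_hasEigenvalue_sigmaGram (hasEigenvalue_sigmaGram_of_sigmaEx h0 hμ))
end
end

section
/- Explicit Moore–Penrose inverse of the covariance matrix in the dependent example: Let n ≥ 2 be an integer, s > 0, and let Σ be the n²×n² matrix indexed by pairs (i,j) ∈ [n]² with Σ_{(i,j),(k,l)} = s²(δ_{ik} + δ_{il} + δ_{jk} + δ_{jl}). Define the n²×n² matrix D by: D_{(i,j),(k,l)} = −3/(4n³s²) if {i,j} ∩ {k,l} = ∅; D_{(i,j),(k,l)} = (n−3)/(4n³s²) if |{i,j} ∩ {k,l}| = 1 with i ≠ j and k ≠ l; D_{(i,j),(k,l)} = (2n−3)/(4n³s²) if |{i,j} ∩ {k,l}| = 1 with (i = j and k ≠ l) or (i ≠ j and k = l), or if |{i,j} ∩ {k,l}| = 2 with i ≠ j; and D_{(i,j),(k,l)} = (4n−3)/(4n³s²) if i = j = k = l. Then D is the Moore–Penrose inverse of Σ, i.e., ΣDΣ = Σ, DΣD = D, (ΣD)ᵗ = ΣD, and (DΣ)ᵗ = DΣ. -/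
open Matrix

noncomputable section

/-- The four Penrose equations characterizing the Moore–Penrose inverse. -/
def IsMoorePenroseInverse {m : Type*} [Fintype m] (S D : Matrix m m ℝ) : Prop :=
  S * D * S = S ∧ D * S * D = D ∧ (S * D)ᵀ = S * D ∧ (D * S)ᵀ = D * S


def Amat (n : ℕ) : Matrix (Fin n × Fin n) (Fin n × Fin n) ℝ :=
  fun q r => (if q.1 = r.1 then (1 : ℝ) else 0) + (if q.1 = r.2 then 1 else 0)
    + (if q.2 = r.1 then 1 else 0) + (if q.2 = r.2 then 1 else 0)

set_option maxHeartbeats 1000000 in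
lemma D_entry (n : ℕ) (s : ℝ)
    (D : Matrix (Fin n × Fin n) (Fin n × Fin n) ℝ)
    (hD : ∀ i j k l : Fin n,
      ((({i, j} : Finset (Fin n)) ∩ {k, l}) = ∅ →
        D (i, j) (k, l) = -3 / (4 * (n : ℝ) ^ 3 * s ^ 2)) ∧
      (((({i, j} : Finset (Fin n)) ∩ {k, l}).card = 1 ∧ i ≠ j ∧ k ≠ l) →
        D (i, j) (k, l) = ((n : ℝ) - 3) / (4 * (n : ℝ) ^ 3 * s ^ 2)) ∧
      ((((({i, j} : Finset (Fin n)) ∩ {k, l}).card = 1 ∧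
          ((i = j ∧ k ≠ l) ∨ (i ≠ j ∧ k = l))) ∨
        ((({i, j} : Finset (Fin n)) ∩ {k, l}).card = 2 ∧ i ≠ j)) →
        D (i, j) (k, l) = (2 * (n : ℝ) - 3) / (4 * (n : ℝ) ^ 3 * s ^ 2)) ∧
      ((i = j ∧ j = k ∧ k = l) →
        D (i, j) (k, l) = (4 * (n : ℝ) - 3) / (4 * (n : ℝ) ^ 3 * s ^ 2))) :
    ∀ q r, D q r = ((n : ℝ) * Amat n q r - 3) / (4 * (n : ℝ) ^ 3 * s ^ 2) := by
  rintro ⟨i, j⟩ ⟨k, l⟩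
  obtain ⟨h1, h2, h3, h4⟩ := hD i j k l
  by_cases hij : i = j
  · by_cases hkl : k = l
    · by_cases hik : i = k
      · obtain rfl := hij; obtain rfl := hik; obtain rfl := hkl
        rw [h4 ⟨rfl, rfl, rfl⟩,
          show Amat n (i, i) (i, i) = 4 from by norm_num [Amat]]
        ring_nf
      · obtain rfl := hij; obtain rfl := hkl
        rw [h1 (by ext x; simp <;> aesop),
          show Amat n (i, i) (k, k) = 0 from by norm_num [Amat, hik]]
        ring_nf
    · obtain rfl := hij
      by_cases hik : i = k
      · obtain rfl := hik
        have hil : i ≠ l := hkl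
        rw [h3 (Or.inl ⟨by rw [show ({i,i} : Finset (Fin n)) ∩ {i,l} = {i} from by
              ext x; simp <;> aesop]; simp, Or.inl ⟨rfl, hkl⟩⟩),
          show Amat n (i, i) (i, l) = 2 from by norm_num [Amat, hil]]
        ring_nf
      · by_cases hil : i = l
        · obtain rfl := hil
          rw [h3 (Or.inl ⟨by rw [show ({i,i} : Finset (Fin n)) ∩ {k,i} = {i} from by
                ext x; simp <;> aesop]; simp, Or.inl ⟨rfl, hkl⟩⟩),
            show Amat n (i, i) (k, i) = 2 from by norm_num [Amat, hik]]
          ring_nf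
        · rw [h1 (by ext x; simp <;> aesop),
            show Amat n (i, i) (k, l) = 0 from by norm_num [Amat, hik, hil]]
          ring_nf
  · by_cases hkl : k = l
    · obtain rfl := hkl
      by_cases hik : i = k
      · obtain rfl := hik
        have hjk : j ≠ i := fun h => hij h.symm
        rw [h3 (Or.inl ⟨by rw [show ({i,j} : Finset (Fin n)) ∩ {i,i} = {i} from by
              ext x; simp <;> aesop]; simp, Or.inr ⟨hij, rfl⟩⟩),
          show Amat n (i, j) (i, i) = 2 from by norm_num [Amat, hjk]]
        ring_nf
      · by_cases hjk : j = k
        · obtain rfl := hjk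
          rw [h3 (Or.inl ⟨by rw [show ({i,j} : Finset (Fin n)) ∩ {j,j} = {j} from by
                ext x; simp <;> aesop]; simp, Or.inr ⟨hij, rfl⟩⟩),
            show Amat n (i, j) (j, j) = 2 from by norm_num [Amat, hik]]
          ring_nf
        · rw [h1 (by ext x; simp <;> aesop),
            show Amat n (i, j) (k, k) = 0 from by norm_num [Amat, hik, hjk]]
          ring_nf
    · by_cases hik : i = k
      · obtain rfl := hik
        have hil : i ≠ l := hkl
        have hjk : j ≠ i := fun h => hij h.symm
        by_cases hjl : j = l
        · obtain rfl := hjl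
          rw [h3 (Or.inr ⟨by rw [show ({i,j} : Finset (Fin n)) ∩ {i,j} = {i,j} from by
                ext x; simp]; exact Finset.card_pair hij, hij⟩),
            show Amat n (i, j) (i, j) = 2 from by norm_num [Amat, hil, hjk]]
          ring_nf
        · rw [h2 ⟨by rw [show ({i,j} : Finset (Fin n)) ∩ {i,l} = {i} from by
              ext x; simp <;> aesop]; simp, hij, hkl⟩,
            show Amat n (i, j) (i, l) = 1 from by norm_num [Amat, hil, hjk, hjl]]
          ring_nf
      · by_cases hil : i = l
        · obtain rfl := hil
          have hjl : j ≠ i := fun h => hij h.symm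
          by_cases hjk : j = k
          · obtain rfl := hjk
            rw [h3 (Or.inr ⟨by rw [show ({i,j} : Finset (Fin n)) ∩ {j,i} = {i,j} from by
                  ext x; simp <;> tauto]; exact Finset.card_pair hij, hij⟩),
              show Amat n (i, j) (j, i) = 2 from by norm_num [Amat, hik, hjl]]
            ring_nf
          · rw [h2 ⟨by rw [show ({i,j} : Finset (Fin n)) ∩ {k,i} = {i} from by
                ext x; simp <;> aesop]; simp, hij, hkl⟩,
              show Amat n (i, j) (k, i) = 1 from by norm_num [Amat, hik, hjk, hjl]]
            ring_nf
        · by_cases hjk : j = k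
          · obtain rfl := hjk
            have hjl : j ≠ l := hkl
            rw [h2 ⟨by rw [show ({i,j} : Finset (Fin n)) ∩ {j,l} = {j} from by
                ext x; simp <;> aesop]; simp, hij, hkl⟩,
              show Amat n (i, j) (j, l) = 1 from by norm_num [Amat, hik, hil, hjl]]
            ring_nf
          · by_cases hjl : j = l
            · obtain rfl := hjl
              rw [h2 ⟨by rw [show ({i,j} : Finset (Fin n)) ∩ {k,j} = {j} from by
                  ext x; simp <;> aesop]; simp, hij, hkl⟩,
                show Amat n (i, j) (k, j) = 1 from by norm_num [Amat, hik, hil, hjk]]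
              ring_nf
            · rw [h1 (by ext x; simp <;> aesop),
                show Amat n (i, j) (k, l) = 0 from by norm_num [Amat, hik, hil, hjk, hjl]]
              ring_nf

def Jmat (n : ℕ) : Matrix (Fin n × Fin n) (Fin n × Fin n) ℝ := fun _ _ => 1

lemma AA (n : ℕ) : Amat n * Amat n = (2*(n:ℝ)) • Amat n + 8 • Jmat n := by
  ext ⟨i,j⟩ ⟨a,b⟩
  simp only [Matrix.mul_apply, Amat, Jmat, Matrix.add_apply, Matrix.smul_apply, smul_eq_mul,
    Fintype.sum_prod_type]
  simp [add_mul, mul_add, Finset.sum_add_distrib, Finset.sum_ite_eq, Finset.sum_ite_eq',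
    mul_ite, ite_mul, Finset.sum_const, Fintype.card_fin]
  split_ifs <;> simp [Finset.card_univ] <;> ring

lemma AJ (n : ℕ) : Amat n * Jmat n = (4*(n:ℝ)) • Jmat n := by
  ext ⟨i,j⟩ ⟨a,b⟩
  simp only [Matrix.mul_apply, Amat, Jmat, Matrix.smul_apply, smul_eq_mul, mul_one,
    Fintype.sum_prod_type, Finset.sum_add_distrib, Finset.sum_const, Finset.sum_ite_eq,
    Finset.sum_ite_eq', Finset.mem_univ, if_true, nsmul_eq_mul, Fintype.card_fin]
  simp [Finset.sum_const, Finset.card_univ, Fintype.card_fin, Finset.sum_ite_eq, Finset.sum_ite_eq',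
    apply_ite Finset.card, apply_ite (Nat.cast : ℕ → ℝ)]
  ring

lemma JA (n : ℕ) : Jmat n * Amat n = (4*(n:ℝ)) • Jmat n := by
  ext ⟨i,j⟩ ⟨a,b⟩
  simp only [Matrix.mul_apply, Amat, Jmat, Matrix.smul_apply, smul_eq_mul, one_mul,
    Fintype.sum_prod_type, Finset.sum_add_distrib, Finset.sum_const, Finset.sum_ite_eq,
    Finset.sum_ite_eq', Finset.mem_univ, if_true, nsmul_eq_mul, Fintype.card_fin]
  simp [Finset.sum_const, Finset.card_univ, Fintype.card_fin, Finset.sum_ite_eq, Finset.sum_ite_eq',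
    apply_ite Finset.card, apply_ite (Nat.cast : ℕ → ℝ)]
  ring

lemma JJ (n : ℕ) : Jmat n * Jmat n = ((n:ℝ)^2) • Jmat n := by
  ext ⟨i,j⟩ ⟨a,b⟩
  simp [Matrix.mul_apply, Jmat, Fintype.card_fin]
  ring

lemma At (n : ℕ) : (Amat n)ᵀ = Amat n := by
  ext ⟨i,j⟩ ⟨a,b⟩
  simp only [Amat, Matrix.transpose_apply]
  rw [show ((if a = i then (1:ℝ) else 0) = if i = a then 1 else 0) by simp [eq_comm]]
  rw [show ((if a = j then (1:ℝ) else 0) = if j = a then 1 else 0) by simp [eq_comm]]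
  rw [show ((if b = i then (1:ℝ) else 0) = if i = b then 1 else 0) by simp [eq_comm]]
  rw [show ((if b = j then (1:ℝ) else 0) = if j = b then 1 else 0) by simp [eq_comm]]
  ring

lemma Jt (n : ℕ) : (Jmat n)ᵀ = Jmat n := rfl

/-- Explicit Moore–Penrose inverse of the covariance matrix in the dependent
example: the matrix `D` with entries `−3/(4n³s²)` when `{i,j} ∩ {k,l} = ∅`,
`(n−3)/(4n³s²)` when `|{i,j} ∩ {k,l}| = 1` with `i ≠ j` and `k ≠ l`,
`(2n−3)/(4n³s²)` when `|{i,j} ∩ {k,l}| = 1` with exactly one of `i = j`, `k = l`,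
or when `|{i,j} ∩ {k,l}| = 2` with `i ≠ j`, and `(4n−3)/(4n³s²)` when
`i = j = k = l`, is the Moore–Penrose inverse of `Σ`. -/
theorem stmt_12 (n : ℕ) (hn : 2 ≤ n) (s : ℝ) (hs : 0 < s)
    (D : Matrix (Fin n × Fin n) (Fin n × Fin n) ℝ)
    (hD : ∀ i j k l : Fin n,
      ((({i, j} : Finset (Fin n)) ∩ {k, l}) = ∅ →
        D (i, j) (k, l) = -3 / (4 * (n : ℝ) ^ 3 * s ^ 2)) ∧
      (((({i, j} : Finset (Fin n)) ∩ {k, l}).card = 1 ∧ i ≠ j ∧ k ≠ l) →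
        D (i, j) (k, l) = ((n : ℝ) - 3) / (4 * (n : ℝ) ^ 3 * s ^ 2)) ∧
      ((((({i, j} : Finset (Fin n)) ∩ {k, l}).card = 1 ∧
          ((i = j ∧ k ≠ l) ∨ (i ≠ j ∧ k = l))) ∨
        ((({i, j} : Finset (Fin n)) ∩ {k, l}).card = 2 ∧ i ≠ j)) →
        D (i, j) (k, l) = (2 * (n : ℝ) - 3) / (4 * (n : ℝ) ^ 3 * s ^ 2)) ∧
      ((i = j ∧ j = k ∧ k = l) →
        D (i, j) (k, l) = (4 * (n : ℝ) - 3) / (4 * (n : ℝ) ^ 3 * s ^ 2))) :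
    IsMoorePenroseInverse (SigmaEx n s) D := by
  have hDe := D_entry n s D hD
  have n0 : (n:ℝ) ≠ 0 := by
    have : 0 < n := lt_of_lt_of_le (by norm_num) hn
    exact_mod_cast this.ne'
  have s0 : s ≠ 0 := ne_of_gt hs
  have hDmat : D = (4*(n:ℝ)^3*s^2)⁻¹ • ((n:ℝ) • Amat n - (3:ℝ) • Jmat n) := by
    ext q r
    rw [hDe q r]
    simp only [Jmat, Matrix.smul_apply, Matrix.sub_apply, smul_eq_mul, div_eq_inv_mul]
    ring
  have hS : SigmaEx n s = s^2 • Amat n := by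
    ext q r; simp [SigmaEx, Amat, mul_add]
  have hSD : SigmaEx n s * D = (2*(n:ℝ))⁻¹ • Amat n - ((n:ℝ)^2)⁻¹ • Jmat n := by
    rw [hS, hDmat]
    simp only [Matrix.smul_mul, Matrix.mul_smul, Matrix.mul_sub, Matrix.sub_mul,
      Matrix.mul_add, Matrix.add_mul, AA, AJ, JA, JJ]
    ext q r
    simp only [Matrix.smul_apply, Matrix.sub_apply, Matrix.add_apply, smul_eq_mul, Jmat]
    field_simp
    ring
  have hDS : D * SigmaEx n s = (2*(n:ℝ))⁻¹ • Amat n - ((n:ℝ)^2)⁻¹ • Jmat n := by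
    rw [hS, hDmat]
    simp only [Matrix.smul_mul, Matrix.mul_smul, Matrix.mul_sub, Matrix.sub_mul,
      Matrix.mul_add, Matrix.add_mul, AA, AJ, JA, JJ]
    ext q r
    simp only [Matrix.smul_apply, Matrix.sub_apply, Matrix.add_apply, smul_eq_mul, Jmat]
    field_simp
    ring
  refine ⟨?_, ?_, ?_, ?_⟩
  · rw [hSD, hS]
    simp only [Matrix.smul_mul, Matrix.mul_smul, Matrix.mul_sub, Matrix.sub_mul,
      Matrix.mul_add, Matrix.add_mul, AA, AJ, JA, JJ]
    ext q r
    simp only [Matrix.smul_apply, Matrix.sub_apply, Matrix.add_apply, smul_eq_mul, Jmat]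
    field_simp
    ring
  · rw [hDS]
    nth_rewrite 1 [hDmat]
    rw [hDmat]
    simp only [Matrix.smul_mul, Matrix.mul_smul, Matrix.mul_sub, Matrix.sub_mul,
      Matrix.mul_add, Matrix.add_mul, AA, AJ, JA, JJ]
    ext q r
    simp only [Matrix.smul_apply, Matrix.sub_apply, Matrix.add_apply, smul_eq_mul, Jmat]
    field_simp
    ring
  · rw [hSD]
    simp [Matrix.transpose_sub, Matrix.transpose_smul, At, Jt]
  · rw [hDS]
    simp [Matrix.transpose_sub, Matrix.transpose_smul, At, Jt]
end
end

section
/- Closed form for the recovery functional L_Σ in the dependent example: Let n ≥ 2, s > 0, and α ∈ (0,1) with αn an integer. Let y : [n] → {1,2} with |y⁻¹(1)| = αn, and let x : [n] → {1,2} be arbitrary. Set t_{a,b} := |x⁻¹(a) ∩ y⁻¹(b)| (so t_{1,1} + t_{2,1} = αn and t_{1,2} + t_{2,2} = (1−α)n), A := t_{1,1} + t_{2,2}, B := t_{1,1} − t_{2,2}. For z : [n] → {1,2}, let A_z be the n×n matrix with (A_z)_{i,j} = 1 if z(i) = z(j) and 0 otherwise. Let Σ be the n²×n² matrix with Σ_{(i,j),(k,l)}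 = s²(δ_{ik} + δ_{il} + δ_{jk} + δ_{jl}) and Σ† its Moore–Penrose inverse. Then L_Σ(x,y) := vec(A_x − A_y)ᵗ Σ† vec(A_x − A_y) = (1/(n³s²)) · [ (nA − 3B²)·(B + (1−2α)n)² + nB²(n − A) ]. -/
open Matrix Finset

noncomputable section

/-- The `{0,1}`-matrix of a two-community assignment: `(A_z)_{i,j} = 1` iff `z(i) = z(j)`.
(The two communities `{1,2}` of the paper are the two elements `0, 1` of `Fin 2`.) -/
def Aassign {n : ℕ} (z : Fin n → Fin 2) : Matrix (Fin n) (Fin n) ℝ :=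
  fun i j => if z i = z j then 1 else 0

/-- Overlap counts `t_{a,b} = |x⁻¹(a) ∩ y⁻¹(b)|`. -/
def tnum {n : ℕ} (x y : Fin n → Fin 2) (a b : Fin 2) : ℕ :=
  (Finset.univ.filter fun v => x v = a ∧ y v = b).card

lemma mp_quadform {m : Type*} [Fintype m] [DecidableEq m]
    (S D : Matrix m m ℝ) (hS : Sᵀ = S)
    (h : IsMoorePenroseInverse S D) (u w : m → ℝ)
    (hw : S *ᵥ u = S *ᵥ (S *ᵥ w)) :
    u ⬝ᵥ (D *ᵥ u) = (S *ᵥ w) ⬝ᵥ w := by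
  obtain ⟨h1, h2, h3, h4⟩ := h
  have e1 : S * Dᵀ = D * S := by rw [← h4, transpose_mul, hS]
  have e2 : Dᵀ * S = S * D := by rw [← h3, transpose_mul, hS]
  have ht : S * (Dᵀ * S) = S := by
    have := congrArg Matrix.transpose h1
    simpa [Matrix.transpose_mul, hS, Matrix.mul_assoc] using this
  have e3 : D * (S * S) = S := by
    rw [← mul_assoc, ← e1, mul_assoc, ht]
  have e4 : D * Dᵀ * S = D := by
    rw [mul_assoc, e2, ← mul_assoc, h2]
  have e5 : D * Dᵀ * (S * S) = D * S := by
    rw [mul_assoc, ← mul_assoc Dᵀ, e2, ← mul_assoc, mul_assoc D, h1]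
  have key : D *ᵥ u = (D * S) *ᵥ w := by
    conv_lhs => rw [← e4]
    rw [← Matrix.mulVec_mulVec, hw, Matrix.mulVec_mulVec, Matrix.mulVec_mulVec,
      mul_assoc (D * Dᵀ) S S, e5]
  rw [key, Matrix.dotProduct_mulVec, ← Matrix.mulVec_transpose, h4,
    ← Matrix.mulVec_mulVec, hw, Matrix.mulVec_mulVec, Matrix.mulVec_mulVec,
    mul_assoc, e3]

lemma sig_mulVec {n : ℕ} {s : ℝ} (v : Fin n × Fin n → ℝ) (i j : Fin n) :
    (SigmaEx n s *ᵥ v) (i, j) = s ^ 2 *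
      ((∑ l, v (i, l)) + (∑ k, v (k, i)) + (∑ l, v (j, l)) + (∑ k, v (k, j))) := by
  simp only [SigmaEx, Matrix.mulVec, dotProduct, Fintype.sum_prod_type]
  simp only [mul_add, add_mul, mul_ite, ite_mul, one_mul, zero_mul, mul_one, mul_zero,
    Finset.sum_add_distrib]
  rw [Finset.sum_comm (f := fun k l => if i = l then s ^ 2 * v (k, l) else 0),
      Finset.sum_comm (f := fun k l => if j = l then s ^ 2 * v (k, l) else 0)]
  simp only [Finset.sum_ite_irrel, Finset.sum_const_zero, Finset.sum_ite_eq,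
    Finset.mem_univ, if_true, Finset.mul_sum]

lemma sig_symm {n : ℕ} {s : ℝ} : (SigmaEx n s)ᵀ = SigmaEx n s := by
  ext q r
  simp only [SigmaEx, Matrix.transpose_apply]
  have h : ∀ a b : Fin n, (if a = b then (1:ℝ) else 0) = (if b = a then 1 else 0) := by
    intro a b; simp [eq_comm]
  rw [h r.1 q.1, h r.1 q.2, h r.2 q.1, h r.2 q.2]
  ring

lemma sum_fiber {n : ℕ} (x y : Fin n → Fin 2) (g : Fin 2 → Fin 2 → ℝ) :
    ∑ i, g (x i) (y i) = ∑ a, ∑ b, (tnum x y a b : ℝ) * g a b := by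
  rw [← Finset.sum_fiberwise Finset.univ (fun i => (x i, y i)) (fun i => g (x i) (y i)),
    Fintype.sum_prod_type]
  refine Finset.sum_congr rfl fun a _ => Finset.sum_congr rfl fun b _ => ?_
  rw [show (Finset.univ.filter fun i => (x i, y i) = (a, b))
      = Finset.univ.filter fun i => x i = a ∧ y i = b by simp [Prod.ext_iff]]
  calc ∑ i ∈ Finset.univ.filter (fun i => x i = a ∧ y i = b), g (x i) (y i)
      = ∑ _i ∈ Finset.univ.filter (fun i => x i = a ∧ y i = b), g a b := by
        refine Finset.sum_congr rfl fun i hi => ?_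
        simp only [Finset.mem_filter] at hi
        rw [hi.2.1, hi.2.2]
    _ = (tnum x y a b : ℝ) * g a b := by rw [Finset.sum_const, tnum, nsmul_eq_mul]

set_option maxHeartbeats 1600000 in
/-- Closed form for the recovery functional `L_Σ` in the dependent example:
`vec(A_x − A_y)ᵗ Σ† vec(A_x − A_y)
  = (1/(n³s²))·[(nA − 3B²)(B + (1−2α)n)² + nB²(n − A)]`
where `A = t_{1,1} + t_{2,2}` and `B = t_{1,1} − t_{2,2}`. -/
theorem stmt_13 (n : ℕ) (hn : 2 ≤ n) (s : ℝ) (hs : 0 < s)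
    (α : ℝ) (hα : α ∈ Set.Ioo (0 : ℝ) 1) (hαn : ∃ m : ℕ, (m : ℝ) = α * n)
    (y : Fin n → Fin 2)
    (hy : ((Finset.univ.filter fun v => y v = 0).card : ℝ) = α * n)
    (x : Fin n → Fin 2)
    (Sdag : Matrix (Fin n × Fin n) (Fin n × Fin n) ℝ)
    (hdag : IsMoorePenroseInverse (SigmaEx n s) Sdag) :
    (fun q : Fin n × Fin n => Aassign x q.1 q.2 - Aassign y q.1 q.2) ⬝ᵥ
        (Sdag *ᵥ fun q : Fin n × Fin n => Aassign x q.1 q.2 - Aassign y q.1 q.2)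
      = (1 / ((n : ℝ) ^ 3 * s ^ 2)) *
          (((n : ℝ) * ((tnum x y 0 0 : ℝ) + (tnum x y 1 1 : ℝ))
              - 3 * ((tnum x y 0 0 : ℝ) - (tnum x y 1 1 : ℝ)) ^ 2) *
            (((tnum x y 0 0 : ℝ) - (tnum x y 1 1 : ℝ)) + (1 - 2 * α) * n) ^ 2
          + (n : ℝ) * ((tnum x y 0 0 : ℝ) - (tnum x y 1 1 : ℝ)) ^ 2 *
            ((n : ℝ) - ((tnum x y 0 0 : ℝ) + (tnum x y 1 1 : ℝ)))) := by

  have hn0 : (n : ℝ) ≠ 0 := Nat.cast_ne_zero.mpr (by omega)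
  have hs0 : s ≠ 0 := ne_of_gt hs
  have hs2 : s ^ 2 ≠ 0 := pow_ne_zero _ hs0
  set u : Fin n × Fin n → ℝ := fun q => Aassign x q.1 q.2 - Aassign y q.1 q.2 with hu
  set cx : Fin 2 → ℝ := fun a => ((Finset.univ.filter fun v => x v = a).card : ℝ) with hcx
  set cy : Fin 2 → ℝ := fun b => ((Finset.univ.filter fun v => y v = b).card : ℝ) with hcy
  set R : Fin n → ℝ := fun i => cx (x i) - cy (y i) with hRdef
  set T : ℝ := ∑ i, R i with hTdef
  set f : Fin n → ℝ := fun i => R i / n - T / (2 * n ^ 2) with hfdef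
  set w : Fin n × Fin n → ℝ := fun q => if q.1 = q.2 then f q.1 / (2 * s ^ 2) else 0 with hwdef
  have husymm : ∀ p q : Fin n, u (p, q) = u (q, p) := by
    intro p q
    simp only [hu, Aassign]
    congr 1 <;> simp [eq_comm]
  have hurow : ∀ i : Fin n, (∑ l, u (i, l)) = R i := by
    intro i
    simp only [hu, hRdef, Aassign, hcx, hcy]
    rw [Finset.sum_sub_distrib]
    congr 1
    · have hfe : (Finset.univ.filter fun l => x i = x l)
          = (Finset.univ.filter fun v => x v = x i) := by
        ext l; simp [eq_comm]
      rw [Finset.sum_boole, hfe]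
    · have hfe : (Finset.univ.filter fun l => y i = y l)
          = (Finset.univ.filter fun v => y v = y i) := by
        ext l; simp [eq_comm]
      rw [Finset.sum_boole, hfe]
  have hucol : ∀ i : Fin n, (∑ k, u (k, i)) = R i := by
    intro i; rw [← hurow i]; exact Finset.sum_congr rfl fun k _ => husymm k i
  have hSu : ∀ i j : Fin n, (SigmaEx n s *ᵥ u) (i, j) = s ^ 2 * (2 * R i + 2 * R j) := by
    intro i j; rw [sig_mulVec, hurow, hucol, hurow, hucol]; ring
  have hwrow : ∀ i : Fin n, (∑ l, w (i, l)) = f i / (2 * s ^ 2) := by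
    intro i; simp only [hwdef]
    rw [Finset.sum_ite_eq]
    simp
  have hwcol : ∀ i : Fin n, (∑ k, w (k, i)) = f i / (2 * s ^ 2) := by
    intro i; simp only [hwdef]
    rw [Finset.sum_ite_eq']
    simp
  have hSw : ∀ i j : Fin n, (SigmaEx n s *ᵥ w) (i, j) = f i + f j := by
    intro i j; rw [sig_mulVec, hwrow, hwcol, hwrow, hwcol]
    field_simp; ring
  have hsumf : ∑ i, f i = T / (2 * n) := by
    simp only [hfdef]
    rw [Finset.sum_sub_distrib, ← Finset.sum_div, ← hTdef, Finset.sum_const,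
      Finset.card_univ, Fintype.card_fin, nsmul_eq_mul]
    field_simp; ring
  have hfr : ∀ i : Fin n, (n : ℝ) * f i + T / (2 * n) = R i := by
    intro i; simp only [hfdef]; field_simp; ring
  have hkey : SigmaEx n s *ᵥ u = SigmaEx n s *ᵥ (SigmaEx n s *ᵥ w) := by
    funext q
    obtain ⟨i, j⟩ := q
    rw [hSu, sig_mulVec]
    have hr : ∀ i' : Fin n, (∑ l, (SigmaEx n s *ᵥ w) (i', l)) = (n : ℝ) * f i' + T / (2 * n) := by
      intro i'
      rw [Finset.sum_congr rfl fun l _ => hSw i' l, Finset.sum_add_distrib,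
        Finset.sum_const, Finset.card_univ, Fintype.card_fin, nsmul_eq_mul, hsumf]
    have hc : ∀ j' : Fin n, (∑ k, (SigmaEx n s *ᵥ w) (k, j')) = (n : ℝ) * f j' + T / (2 * n) := by
      intro j'
      rw [Finset.sum_congr rfl fun k _ => hSw k j', Finset.sum_add_distrib,
        Finset.sum_const, Finset.card_univ, Fintype.card_fin, nsmul_eq_mul, hsumf]
      ring
    rw [hr, hc, hr, hc, hfr, hfr]
    ring
  rw [mp_quadform (SigmaEx n s) Sdag sig_symm hdag u w hkey]
  have hdot : (SigmaEx n s *ᵥ w) ⬝ᵥ w = (∑ i, f i ^ 2) / s ^ 2 := by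
    simp only [dotProduct, Fintype.sum_prod_type]
    rw [Finset.sum_congr rfl fun k _ => Finset.sum_congr rfl fun l _ => by rw [hSw k l]]
    simp only [hwdef, mul_ite, mul_zero, Finset.sum_ite_eq, Finset.mem_univ, if_true]
    have h2 : ∀ k : Fin n, (f k + f k) * (f k / (2 * s ^ 2)) = f k ^ 2 / s ^ 2 := by
      intro k; field_simp; ring
    rw [Finset.sum_congr rfl fun k _ => h2 k, ← Finset.sum_div]
  rw [hdot]
  have hcxa : ∀ a, cx a = (tnum x y a 0 : ℝ) + (tnum x y a 1 : ℝ) := by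
    intro a
    have h1 : cx a = ∑ i, (if x i = a then (1 : ℝ) else 0) := by
      simp only [hcx]; rw [Finset.sum_boole]
    rw [h1, show (∑ i, (if x i = a then (1 : ℝ) else 0))
        = ∑ a', ∑ b, (tnum x y a' b : ℝ) * (if a' = a then (1 : ℝ) else 0)
      from sum_fiber x y (fun a' _ => if a' = a then (1 : ℝ) else 0)]
    fin_cases a <;> simp [Fin.sum_univ_two]
  have hcya : ∀ b, cy b = (tnum x y 0 b : ℝ) + (tnum x y 1 b : ℝ) := by
    intro b
    have h1 : cy b = ∑ i, (if y i = b then (1 : ℝ) else 0) := by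
      simp only [hcy]; rw [Finset.sum_boole]
    rw [h1, show (∑ i, (if y i = b then (1 : ℝ) else 0))
        = ∑ a, ∑ b', (tnum x y a b' : ℝ) * (if b' = b then (1 : ℝ) else 0)
      from sum_fiber x y (fun _ b' => if b' = b then (1 : ℝ) else 0)]
    fin_cases b <;> simp [Fin.sum_univ_two] <;> ring
  have hy0 : cy 0 = α * n := by simp only [hcy]; exact hy
  have hTt : T = ∑ a, ∑ b, (tnum x y a b : ℝ) * (cx a - cy b) := by
    rw [hTdef]
    simp only [hRdef]
    exact sum_fiber x y (fun a b => cx a - cy b)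
  have hsumf2 : ∑ i, f i ^ 2
      = ∑ a, ∑ b, (tnum x y a b : ℝ) * ((cx a - cy b) / n - T / (2 * n ^ 2)) ^ 2 := by
    simp only [hfdef, hRdef]
    exact sum_fiber x y (fun a b => ((cx a - cy b) / n - T / (2 * n ^ 2)) ^ 2)
  have htot : (n : ℝ) = (tnum x y 0 0 : ℝ) + (tnum x y 0 1 : ℝ)
      + (tnum x y 1 0 : ℝ) + (tnum x y 1 1 : ℝ) := by
    have h1 := sum_fiber x y (fun _ _ => (1 : ℝ))
    simp only [Fin.sum_univ_two, mul_one, Finset.sum_const, Finset.card_univ,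
      Fintype.card_fin, nsmul_eq_mul] at h1
    linarith [h1]
  have e1 : (tnum x y 0 0 : ℝ) + (tnum x y 1 0 : ℝ) = α * n := by
    rw [← hy0, hcya]
  have halpha : (1 - 2 * α) * (n : ℝ)
      = (n : ℝ) - 2 * ((tnum x y 0 0 : ℝ) + (tnum x y 1 0 : ℝ)) := by
    rw [e1]; ring
  rw [hsumf2, hTt]
  simp only [Fin.sum_univ_two, hcxa, hcya]
  rw [halpha]
  have hne : (tnum x y 0 0 : ℝ) + (tnum x y 0 1 : ℝ)
      + (tnum x y 1 0 : ℝ) + (tnum x y 1 1 : ℝ) ≠ 0 := htot ▸ hn0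
  rw [htot]
  field_simp
  ring
end
end

section
/- Vanishing of L_Σ characterizes the true partition (Proposition 6.1): Let n ≥ 2, s > 0, and α ∈ (1/2, 2/3) with αn an integer. Let y : [n] → {1,2} with |y⁻¹(1)| = αn, let x : [n] → {1,2}, and set t_{a,b} := |x⁻¹(a) ∩ y⁻¹(b)|, A := t_{1,1} + t_{2,2}, B := t_{1,1} − t_{2,2}. Then L_Σ(x,y) = (1/(n³s²))[(nA − 3B²)(B + (1−2α)n)² + nB²(n − A)] satisfies L_Σ(x,y) ≥ 0, and L_Σ(x,y) = 0 if and only if x ∈ C(y), i.e., if and only if either (t_{1,1} = αn and t_{2,2} = (1−α)n), in which case x = y, or (t_{1,1} = 0 and t_{2,2} = 0), in which case x is y with the two community labels swapped. -/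
open Finset

noncomputable section

lemma f3 (n c b : ℤ) (hb : 1 ≤ b) (hc : 1 ≤ c) (hc3 : 3*c ≤ n - 2) (hbc : 2*b + c ≤ n) :
    0 < n*b*(n-b) + (b+c)^2*(n-3*b) := by
  rcases le_or_gt (3*b) n with h | h
  · nlinarith [mul_pos (mul_pos (by omega : (0:ℤ) < n) hb) (by omega : (0:ℤ) < n - b),
      mul_nonneg (sq_nonneg (b+c)) (by omega : (0:ℤ) ≤ n - 3*b)]
  · nlinarith [mul_nonneg (mul_nonneg (by omega : (0:ℤ) ≤ n - 2*b - c) (by omega : (0:ℤ) ≤ 3*b - n)) (by omega : (0:ℤ) ≤ b + c),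
      mul_nonneg (mul_nonneg (by omega : (0:ℤ) ≤ n - 2*b - c) (by omega : (0:ℤ) ≤ n - 2*b - c)) (by omega : (0:ℤ) ≤ 3*b - n),
      mul_pos (mul_pos hb hc) (by omega : (0:ℤ) < n),
      mul_pos (mul_pos hb hb) (by omega : (0:ℤ) < n),
      mul_nonneg (mul_nonneg (by omega : (0:ℤ) ≤ 3*b - n) (by omega : (0:ℤ) ≤ c)) (by omega : (0:ℤ) ≤ b)]

lemma case1 (n c d σ : ℤ) (hc : 1 ≤ c) (hd : 1 ≤ d) (hσ : d ≤ σ) (hq : σ + d ≤ n - c)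
    (h3B : 3*(c+d) ≤ 2*n - 1) :
    0 < n^2*d^2 - 3*(c+d)^2*d^2 + n*σ*((c+d)^2 - d^2) := by
  nlinarith [mul_nonneg (mul_nonneg (mul_nonneg (by omega : (0:ℤ) ≤ n) (by omega : (0:ℤ) ≤ σ - d)) (by omega : (0:ℤ) ≤ c)) (by omega : (0:ℤ) ≤ c + 2*d),
    mul_nonneg (mul_nonneg (mul_nonneg (by omega : (0:ℤ) ≤ 2*n - 1 - 3*(c+d)) (by omega : (0:ℤ) ≤ c + d)) (by omega : (0:ℤ) ≤ d)) (by omega : (0:ℤ) ≤ d),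
    mul_nonneg (mul_nonneg (mul_nonneg (by omega : (0:ℤ) ≤ n) (by omega : (0:ℤ) ≤ n - 2*d - c)) (by omega : (0:ℤ) ≤ d)) (by omega : (0:ℤ) ≤ d),
    mul_nonneg (mul_nonneg (mul_nonneg (by omega : (0:ℤ) ≤ n) (by omega : (0:ℤ) ≤ c)) (by omega : (0:ℤ) ≤ d)) (by omega : (0:ℤ) ≤ d),
    mul_nonneg (mul_nonneg (by omega : (0:ℤ) ≤ d) (by omega : (0:ℤ) ≤ d)) (by omega : (0:ℤ) ≤ c),
    mul_pos (mul_pos (mul_pos (by omega : (0:ℤ) < n) (by omega : (0:ℤ) < d)) (by omega : (0:ℤ) < c)) (by omega : (0:ℤ) < c),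
    mul_pos (mul_pos (by omega : (0:ℤ) < d) (by omega : (0:ℤ) < d)) (by omega : (0:ℤ) < d)]

lemma case2 (n c d σ : ℤ) (hc : 1 ≤ c) (hd : d ≤ -1) (hc2d : 0 ≤ c + 2*d) (hσ : 0 ≤ σ)
    (hc3 : 3*c ≤ n - 2) :
    0 < n^2*d^2 - 3*(c+d)^2*d^2 + n*σ*((c+d)^2 - d^2) := by
  nlinarith [mul_nonneg (mul_nonneg (mul_nonneg (by omega : (0:ℤ) ≤ n) hσ) (by omega : (0:ℤ) ≤ c)) hc2d,
    mul_nonneg (mul_nonneg (mul_nonneg (by omega : (0:ℤ) ≤ -d) (by omega : (0:ℤ) ≤ 2*c + d)) (by omega : (0:ℤ) ≤ -d)) (by omega : (0:ℤ) ≤ -d),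
    mul_nonneg (mul_nonneg (mul_nonneg (by omega : (0:ℤ) ≤ n - 2 - 3*c) (by omega : (0:ℤ) ≤ c)) (by omega : (0:ℤ) ≤ -d)) (by omega : (0:ℤ) ≤ -d),
    mul_nonneg (mul_nonneg (mul_nonneg (by omega : (0:ℤ) ≤ n - 2) (by omega : (0:ℤ) ≤ n - c)) (by omega : (0:ℤ) ≤ -d)) (by omega : (0:ℤ) ≤ -d),
    mul_pos (mul_pos (by omega : (0:ℤ) < 2*n) (by omega : (0:ℤ) < -d)) (by omega : (0:ℤ) < -d)]

lemma case3 (n c d σ : ℤ) (hc : 1 ≤ c) (hB : c + d ≤ -1) (hσ : σ ≤ n + c + d)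
    (hc3 : 3*c ≤ n - 2) (hp : -c - 2*d ≤ n) :
    0 < n^2*d^2 - 3*(c+d)^2*d^2 + n*σ*((c+d)^2 - d^2) := by
  have hf := f3 n c (-(c+d)) (by omega) hc hc3 (by omega)
  nlinarith [mul_nonneg (mul_nonneg (by omega : (0:ℤ) ≤ n) (by omega : (0:ℤ) ≤ n + c + d - σ)) (by nlinarith [mul_nonneg (by omega : (0:ℤ) ≤ c) (by omega : (0:ℤ) ≤ -(c+2*d))] : (0:ℤ) ≤ d^2 - (c+d)^2),
    mul_pos (by omega : (0:ℤ) < -(c+d)) hf]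

lemma case5 (n c d σ : ℤ) (hc : 1 ≤ c) (hB : 1 ≤ c + d) (hc2d : c + 2*d ≤ -1)
    (hσ : σ + d ≤ n - c) (hc3 : 3*c ≤ n - 2) :
    0 < n^2*d^2 - 3*(c+d)^2*d^2 + n*σ*((c+d)^2 - d^2) := by
  nlinarith [mul_nonneg (mul_nonneg (by omega : (0:ℤ) ≤ n) (by omega : (0:ℤ) ≤ n - c - d - σ)) (mul_nonneg (by omega : (0:ℤ) ≤ -d - (c+d)) (by omega : (0:ℤ) ≤ -d + (c+d))),
    mul_pos (mul_pos (mul_pos (by omega : (0:ℤ) < n) hB) hB) (by omega : (0:ℤ) < n - (c+d)),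
    mul_nonneg (mul_nonneg (mul_nonneg (by omega : (0:ℤ) ≤ c + d) (by omega : (0:ℤ) ≤ -d)) (by omega : (0:ℤ) ≤ -d)) (by omega : (0:ℤ) ≤ n - 3*(c+d))]

lemma Epos (n m u v : ℤ) (hu0 : 0 ≤ u) (hum : u ≤ m) (hv0 : 0 ≤ v) (hv : v ≤ n - m)
    (h1 : n + 1 ≤ 2*m) (h2 : 3*m + 1 ≤ 2*n)
    (hd : u - v + n - 2*m ≠ 0) (hB : u ≠ v) :
    0 < (n*(u+v) - 3*(u-v)^2)*((u-v)+(n-2*m))^2 + n*(u-v)^2*(n-u-v) := by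
  have key : 0 < n^2*(u-v+n-2*m)^2 - 3*((2*m-n)+(u-v+n-2*m))^2*(u-v+n-2*m)^2
      + n*(n-u-v)*(((2*m-n)+(u-v+n-2*m))^2 - (u-v+n-2*m)^2) := by
    rcases lt_or_gt_of_ne hd with hdneg | hdpos
    · rcases le_or_gt 0 ((2*m-n) + 2*(u-v+n-2*m)) with hc2d | hc2d
      · exact case2 n (2*m-n) (u-v+n-2*m) (n-u-v) (by omega) (by omega) (by omega) (by omega) (by omega)
      · rcases lt_trichotomy (u - v) 0 with hBs | hBs | hBs
        · exact case3 n (2*m-n) (u-v+n-2*m) (n-u-v) (by omega) (by omega) (by omega) (by omega) (by omega)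
        · exact absurd hBs (by omega)
        · exact case5 n (2*m-n) (u-v+n-2*m) (n-u-v) (by omega) (by omega) (by omega) (by omega) (by omega)
    · exact case1 n (2*m-n) (u-v+n-2*m) (n-u-v) (by omega) (by omega) (by omega) (by omega) (by omega)
  nlinarith [key]

lemma keyInt (n m u v : ℤ) (hu0 : 0 ≤ u) (hum : u ≤ m) (hv0 : 0 ≤ v) (hv : v ≤ n - m)
    (h1 : n + 1 ≤ 2*m) (h2 : 3*m + 1 ≤ 2*n) :
    0 ≤ (n*(u+v) - 3*(u-v)^2)*((u-v)+(n-2*m))^2 + n*(u-v)^2*(n-u-v) ∧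
    ((n*(u+v) - 3*(u-v)^2)*((u-v)+(n-2*m))^2 + n*(u-v)^2*(n-u-v) = 0 ↔
      ((u = m ∧ v = n - m) ∨ (u = 0 ∧ v = 0))) := by
  by_cases hd0 : u - v + n - 2*m = 0
  · have hE : (n*(u+v) - 3*(u-v)^2)*((u-v)+(n-2*m))^2 + n*(u-v)^2*(n-u-v)
        = (n*(2*m-n)^2)*(n-u-v) := by
      linear_combination ((n*(u+v)-3*(u-v)^2)*(u-v+n-2*m) + n*(n-u-v)*(u-v+2*m-n)) * hd0
    rw [hE]
    have hpos : 0 < n*(2*m-n)^2 := by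
      have := mul_pos (show (0:ℤ) < n by omega) (pow_pos (show (0:ℤ) < 2*m-n by omega) 2); linarith
    constructor
    · exact mul_nonneg hpos.le (by omega)
    · rw [mul_eq_zero]
      constructor
      · rintro (h | h) <;> omega
      · rintro (⟨rfl, hv'⟩ | ⟨rfl, rfl⟩) <;> omega
  · by_cases hB0 : u = v
    · subst hB0
      have hE : (n*(u+u) - 3*(u-u)^2)*((u-u)+(n-2*m))^2 + n*(u-u)^2*(n-u-u)
          = (n*(n-2*m)^2)*(2*u) := by ring
      rw [hE]
      have hpos : 0 < n*(n-2*m)^2 := by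
        have h9 : (n-2*m)^2 = (2*m-n)^2 := by ring
        rw [h9]
        have := mul_pos (show (0:ℤ) < n by omega) (pow_pos (show (0:ℤ) < 2*m-n by omega) 2); linarith
      constructor
      · exact mul_nonneg hpos.le (by omega)
      · rw [mul_eq_zero]
        constructor
        · rintro (h | h) <;> omega
        · rintro (⟨ha, hb⟩ | ⟨ha, hb⟩) <;> omega
    · have h := Epos n m u v hu0 hum hv0 hv h1 h2 hd0 hB0
      refine ⟨h.le, ?_⟩
      constructor
      · intro h0; omega
      · rintro (⟨ha, hb⟩ | ⟨ha, hb⟩) <;> omega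

lemma fin2_cases (a : Fin 2) : a = 0 ∨ a = 1 := by fin_cases a <;> simp

lemma tnum_split {n : ℕ} (x y : Fin n → Fin 2) (b : Fin 2) :
    tnum x y 0 b + tnum x y 1 b = (Finset.univ.filter fun v => y v = b).card := by
  classical
  have h0 : (Finset.univ.filter fun v => x v = 0 ∧ y v = b)
      = (Finset.univ.filter fun v => y v = b).filter (fun v => x v = 0) := by
    rw [Finset.filter_filter]
    apply Finset.filter_congr
    intro v _
    simp [and_comm]
  have h1 : (Finset.univ.filter fun v => x v = 1 ∧ y v = b)
      = (Finset.univ.filter fun v => y v = b).filter (fun v => ¬ x v = 0) := by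
    rw [Finset.filter_filter]
    apply Finset.filter_congr
    intro v _
    have hx : (x v = 1) ↔ ¬ x v = 0 := (by decide : ∀ a : Fin 2, a = 1 ↔ ¬ a = 0) (x v)
    simp [hx, and_comm]
  unfold tnum
  rw [h0, h1]
  exact Finset.card_filter_add_card_filter_not _

lemma cell_empty {n : ℕ} (x y : Fin n → Fin 2) (a b : Fin 2) (h : tnum x y a b = 0)
    (v : Fin n) (hx : x v = a) (hy : y v = b) : False := by
  classical
  have hm : v ∈ Finset.univ.filter fun v => x v = a ∧ y v = b :=
    Finset.mem_filter.mpr ⟨Finset.mem_univ v, hx, hy⟩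
  rw [Finset.card_eq_zero.mp h] at hm
  exact absurd hm (Finset.notMem_empty v)

/-- Vanishing of `L_Σ` characterizes the true partition (Proposition 6.1): with
`A = t_{1,1} + t_{2,2}`, `B = t_{1,1} − t_{2,2}` and
`L_Σ(x,y) = (1/(n³s²))[(nA − 3B²)(B + (1−2α)n)² + nB²(n − A)]`, one has
`L_Σ(x,y) ≥ 0`, and `L_Σ(x,y) = 0` iff `x ∈ C(y)`, i.e. iff either
`t_{1,1} = αn` and `t_{2,2} = (1−α)n` (in which case `x = y`), or
`t_{1,1} = t_{2,2} = 0` (in which case `x` is `y` with the two labels swapped). -/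
theorem stmt_14 (n : ℕ) (hn : 2 ≤ n) (s : ℝ) (hs : 0 < s)
    (α : ℝ) (hα : α ∈ Set.Ioo (1 / 2 : ℝ) (2 / 3)) (hαn : ∃ m : ℕ, (m : ℝ) = α * n)
    (y : Fin n → Fin 2)
    (hy : ((Finset.univ.filter fun v => y v = 0).card : ℝ) = α * n)
    (x : Fin n → Fin 2) :
    0 ≤ (1 / ((n : ℝ) ^ 3 * s ^ 2)) *
        (((n : ℝ) * ((tnum x y 0 0 : ℝ) + (tnum x y 1 1 : ℝ))
            - 3 * ((tnum x y 0 0 : ℝ) - (tnum x y 1 1 : ℝ)) ^ 2) *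
          (((tnum x y 0 0 : ℝ) - (tnum x y 1 1 : ℝ)) + (1 - 2 * α) * n) ^ 2
        + (n : ℝ) * ((tnum x y 0 0 : ℝ) - (tnum x y 1 1 : ℝ)) ^ 2 *
          ((n : ℝ) - ((tnum x y 0 0 : ℝ) + (tnum x y 1 1 : ℝ)))) ∧
    ((1 / ((n : ℝ) ^ 3 * s ^ 2)) *
        (((n : ℝ) * ((tnum x y 0 0 : ℝ) + (tnum x y 1 1 : ℝ))
            - 3 * ((tnum x y 0 0 : ℝ) - (tnum x y 1 1 : ℝ)) ^ 2) *
          (((tnum x y 0 0 : ℝ) - (tnum x y 1 1 : ℝ)) + (1 - 2 * α) * n) ^ 2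
        + (n : ℝ) * ((tnum x y 0 0 : ℝ) - (tnum x y 1 1 : ℝ)) ^ 2 *
          ((n : ℝ) - ((tnum x y 0 0 : ℝ) + (tnum x y 1 1 : ℝ)))) = 0 ↔
      (((tnum x y 0 0 : ℝ) = α * n ∧ (tnum x y 1 1 : ℝ) = (1 - α) * n) ∨
        (tnum x y 0 0 = 0 ∧ tnum x y 1 1 = 0))) ∧
    (((tnum x y 0 0 : ℝ) = α * n ∧ (tnum x y 1 1 : ℝ) = (1 - α) * n) → x = y) ∧
    ((tnum x y 0 0 = 0 ∧ tnum x y 1 1 = 0) →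
      x = ⇑(Equiv.swap (0 : Fin 2) 1) ∘ y) := by
  classical
  obtain ⟨m, hm⟩ := hαn
  obtain ⟨hα1, hα2⟩ := hα
  have hn0 : (0:ℝ) < (n:ℝ) := by exact_mod_cast (by omega : 0 < n)
  have hcard0 : ((Finset.univ.filter fun v => y v = 0).card) = m := by
    have h := hy.trans hm.symm
    exact_mod_cast h
  have htot : (Finset.univ.filter fun v => y v = 0).card
      + (Finset.univ.filter fun v => ¬ y v = 0).card = n := by
    rw [Finset.card_filter_add_card_filter_not]
    simp
  have hfilter1 : (Finset.univ.filter fun v => y v = 1)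
      = (Finset.univ.filter fun v => ¬ y v = 0) := by
    apply Finset.filter_congr
    intro v _
    simp [(by decide : ∀ a : Fin 2, a = 1 ↔ ¬ a = 0) (y v)]
  have hcard1 : (Finset.univ.filter fun v => y v = 1).card = n - m := by
    rw [hfilter1]; omega
  have hs0 := tnum_split x y 0
  have hs1 := tnum_split x y 1
  rw [hcard0] at hs0
  rw [hcard1] at hs1
  have hmn : n + 1 ≤ 2*m := by
    have h1 : (n:ℝ) < 2*(m:ℝ) := by rw [hm]; nlinarith
    have h2 : n < 2*m := by exact_mod_cast h1
    omega
  have hmn2 : 3*m + 1 ≤ 2*n := by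
    have h1 : 3*(m:ℝ) < 2*(n:ℝ) := by rw [hm]; nlinarith
    have h2 : 3*m < 2*n := by exact_mod_cast h1
    omega
  have hmlen : m ≤ n := by omega
  have hub : tnum x y 0 0 ≤ m := by omega
  have hvb : tnum x y 1 1 ≤ n - m := by omega
  set a := tnum x y 0 0 with haa
  set b := tnum x y 1 1 with hbb
  have key := keyInt (n:ℤ) (m:ℤ) (a:ℤ) (b:ℤ) (by positivity) (by exact_mod_cast hub)
    (by positivity) (by omega) (by omega) (by omega)
  have hαn' : (1 - 2*α)*(n:ℝ) = (n:ℝ) - 2*(m:ℝ) := by linear_combination 2*hm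
  have hcastE : ((n : ℝ) * ((a : ℝ) + (b : ℝ)) - 3 * ((a : ℝ) - (b : ℝ)) ^ 2) *
          (((a : ℝ) - (b : ℝ)) + (1 - 2 * α) * n) ^ 2
        + (n : ℝ) * ((a : ℝ) - (b : ℝ)) ^ 2 * ((n : ℝ) - ((a : ℝ) + (b : ℝ)))
      = ((((n:ℤ)*((a:ℤ)+(b:ℤ)) - 3*((a:ℤ)-(b:ℤ))^2)*(((a:ℤ)-(b:ℤ))+((n:ℤ)-2*(m:ℤ)))^2
        + (n:ℤ)*((a:ℤ)-(b:ℤ))^2*((n:ℤ)-(a:ℤ)-(b:ℤ)) : ℤ) : ℝ) := by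
    rw [hαn']
    push_cast
    ring
  have hfacpos : 0 < 1 / ((n : ℝ)^3 * s^2) := by positivity
  have hbnm : ((b:ℝ) = (1 - α) * n) ↔ ((b:ℤ) = (n:ℤ) - (m:ℤ)) := by
    constructor
    · intro h
      have h' : (b:ℝ) = (n:ℝ) - (m:ℝ) := by rw [h]; linear_combination hm
      exact_mod_cast h'
    · intro h
      have h' : (b:ℝ) = (n:ℝ) - (m:ℝ) := by exact_mod_cast h
      rw [h', hm]; ring
  have hanm : ((a:ℝ) = α * n) ↔ ((a:ℤ) = (m:ℤ)) := by
    rw [← hm]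
    exact_mod_cast Iff.rfl
  refine ⟨?_, ?_, ?_, ?_⟩
  · apply mul_nonneg hfacpos.le
    rw [hcastE]
    exact_mod_cast key.1
  · rw [mul_eq_zero]
    constructor
    · intro h
      have hE0 := h.resolve_left (ne_of_gt hfacpos)
      rw [hcastE] at hE0
      have hE0' : (((n:ℤ)*((a:ℤ)+(b:ℤ)) - 3*((a:ℤ)-(b:ℤ))^2)*(((a:ℤ)-(b:ℤ))+((n:ℤ)-2*(m:ℤ)))^2
        + (n:ℤ)*((a:ℤ)-(b:ℤ))^2*((n:ℤ)-(a:ℤ)-(b:ℤ)) : ℤ) = 0 := by exact_mod_cast hE0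
      rcases key.2.mp hE0' with ⟨h1, h2⟩ | ⟨h1, h2⟩
      · exact Or.inl ⟨hanm.mpr h1, hbnm.mpr h2⟩
      · exact Or.inr ⟨by exact_mod_cast h1, by exact_mod_cast h2⟩
    · intro h
      right
      rw [hcastE]
      have hE0 := key.2.mpr (by
        rcases h with ⟨h1, h2⟩ | ⟨h1, h2⟩
        · exact Or.inl ⟨hanm.mp h1, hbnm.mp h2⟩
        · exact Or.inr ⟨by exact_mod_cast h1, by exact_mod_cast h2⟩)
      exact_mod_cast hE0
  · rintro ⟨h1, h2⟩
    have ham : a = m := by exact_mod_cast hanm.mp h1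
    have hbm : (b:ℤ) = (n:ℤ) - (m:ℤ) := hbnm.mp h2
    have h10 : tnum x y 1 0 = 0 := by omega
    have h01 : tnum x y 0 1 = 0 := by omega
    funext v
    rcases fin2_cases (x v) with hx | hx <;> rcases fin2_cases (y v) with hy' | hy'
    · rw [hx, hy']
    · exact (cell_empty x y 0 1 h01 v hx hy').elim
    · exact (cell_empty x y 1 0 h10 v hx hy').elim
    · rw [hx, hy']
  · rintro ⟨h1, h2⟩
    funext v
    show x v = Equiv.swap (0 : Fin 2) 1 (y v)
    rcases fin2_cases (x v) with hx | hx <;> rcases fin2_cases (y v) with hy' | hy'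
    · exact (cell_empty x y 0 0 h1 v hx hy').elim
    · rw [hx, hy', Equiv.swap_apply_right]
    · rw [hx, hy', Equiv.swap_apply_left]
    · exact (cell_empty x y 1 1 h2 v hx hy').elim
end
end

section
/- Key algebraic inequality in the example (inequality (6.7) / (\ref{tlg})): Let n > 0 and α be real numbers with 1/2 < α < 2/3, and let A, B be real numbers satisfying 0 ≤ A ≤ n, B² ≤ αnA, |B + (1 − 2α)n| ≤ n − A, |B + (1 − 2α)n| ≤ αn, and 3B² ≥ nA. Then n·B²·(n − A) − (3B² − nA)·(B + (1 − 2α)n)² ≥ n²·A·(n − A)·α·(2 − 3α) ≥ 0. -/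
/-- Key algebraic inequality (6.7) in the dependent example: for real numbers
`n, α, A, B` with `1/2 < α < 2/3`, `0 ≤ A ≤ n`, `B² ≤ αnA`,
`|B + (1 − 2α)n| ≤ n − A`, `|B + (1 − 2α)n| ≤ αn` and `3B² ≥ nA`, we have
`n·B²·(n − A) − (3B² − nA)·(B + (1 − 2α)n)² ≥ n²·A·(n − A)·α·(2 − 3α) ≥ 0`. -/
theorem stmt_15 (n α A B : ℝ) (hn : 0 < n)
    (hα₁ : 1 / 2 < α) (hα₂ : α < 2 / 3)
    (hA₀ : 0 ≤ A) (hAn : A ≤ n)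
    (hB : B ^ 2 ≤ α * n * A)
    (h₁ : |B + (1 - 2 * α) * n| ≤ n - A)
    (h₂ : |B + (1 - 2 * α) * n| ≤ α * n)
    (h₃ : 3 * B ^ 2 ≥ n * A) :
    n * B ^ 2 * (n - A) - (3 * B ^ 2 - n * A) * (B + (1 - 2 * α) * n) ^ 2
      ≥ n ^ 2 * A * (n - A) * α * (2 - 3 * α) ∧
    n ^ 2 * A * (n - A) * α * (2 - 3 * α) ≥ 0 := by
  have hna : (0:ℝ) ≤ n - A := by linarith
  have hα0 : (0:ℝ) < α := by linarith
  have h23 : (0:ℝ) < 2 - 3 * α := by linarith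
  have hsq : (B + (1 - 2 * α) * n) ^ 2 ≤ (n - A) * (α * n) := by
    calc (B + (1 - 2 * α) * n) ^ 2
        = |B + (1 - 2 * α) * n| * |B + (1 - 2 * α) * n| := by
          rw [abs_mul_abs_self]; ring
      _ ≤ (n - A) * (α * n) := mul_le_mul h₁ h₂ (abs_nonneg _) hna
  constructor
  · nlinarith [mul_nonneg (sub_nonneg.2 h₃) (sub_nonneg.2 hsq),
      mul_nonneg (mul_nonneg (mul_nonneg hn.le hna) (by linarith : (0:ℝ) ≤ 3 * α - 1))
        (sub_nonneg.2 hB)]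
  · nlinarith [mul_nonneg (mul_nonneg (mul_nonneg (mul_nonneg (sq_nonneg n) hA₀) hna) hα0.le) h23.le]
end

section
/- Lower bound on L_Σ away from the true partition (Proposition 6.2): Let α ∈ (1/2, 2/3) and ε ∈ (0, (1−α)/2). Let n ≥ 2 with αn an integer, s > 0, y : [n] → {1,2} with |y⁻¹(1)| = αn, and x : [n] → {1,2} such that, with t_{a,b} := |x⁻¹(a) ∩ y⁻¹(b)| and A := t_{1,1} + t_{2,2}, one has εn ≤ A ≤ (1−ε)n (i.e., (t_{1,1},t_{1,2},t_{2,1},t_{2,2}) ∈ B \ B_ε). Then L_Σ(x,y) ≥ C_{α,ε} · n/s², where C_{α,ε} := min{ α(2−3α)ε², (α−1/2)²·[1−(α−1/2)²]·ε·(1+ε)², ε²·(α−1/2)² } > 0 is a constant depending only on α and ε. -/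
/-!
With `a = A / n` and `b = B / n` the numerator of `L_Σ` is `n⁴ F(a, b)`, where
`F(a, b) = (a - 3b²)(b + 1 - 2α)² + b²(1 - a)`, and the overlap counts confine `(a, b)` to
`|b| ≤ a`, `a + b ≤ 2α`, `a - b ≤ 2(1 - α)`, `ε ≤ a ≤ 1 - ε`. If `|b| ≤ α - 1/2`, then
`3b² ≤ a/2` and `|b + 1 - 2α| ≥ α - 1/2`, so the first term is at least `(ε/2)(α - 1/2)²`.
If `|b| > α - 1/2` and `3b² ≤ a`, the first term is nonnegative and the second is at least
`(α - 1/2)² ε`. Otherwise `|b| > 1/3`, and since `F` is affine in `a` it is enough to bound it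
at the extreme admissible values of `a`, where it is at least `1/576`. In every case
`F ≥ ε²(α - 1/2)²`, the third term of `C_{α,ε}`.
-/

open Finset

noncomputable section

lemma card_filter_eq_zero_add_card_filter_eq_one {ι : Type*} (s : Finset ι) (f : ι → Fin 2) :
    #(s.filter (f · = 0)) + #(s.filter (f · = 1)) = #s := by
  rw [← card_filter_add_card_filter_not (s := s) (f · = 0)]
  congr 2
  exact filter_congr fun v _ => by generalize f v = i; fin_cases i <;> simp

lemma tnum_zero_add_tnum_one {n : ℕ} (x y : Fin n → Fin 2) (b : Fin 2) :
    tnum x y 0 b + tnum x y 1 b = #(univ.filter (y · = b)) := by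
  simpa only [tnum, filter_filter, and_comm] using
    card_filter_eq_zero_add_card_filter_eq_one (univ.filter (y · = b)) x

lemma tnum_diag_le {n : ℕ} {α : ℝ} (x y : Fin n → Fin 2)
    (hy : (#(univ.filter (y · = 0)) : ℝ) = α * n) :
    (tnum x y 0 0 : ℝ) ≤ α * n ∧ (tnum x y 1 1 : ℝ) ≤ (1 - α) * n := by
  have h0 := tnum_zero_add_tnum_one x y 0
  have h1 := tnum_zero_add_tnum_one x y 1
  have hy1 := card_filter_eq_zero_add_card_filter_eq_one univ y
  rw [card_univ, Fintype.card_fin, ← h0, ← h1] at hy1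
  rw [← h0] at hy
  have hn : ((tnum x y 0 0 + tnum x y 1 0 + (tnum x y 0 1 + tnum x y 1 1) : ℕ) : ℝ) = n := by
    exact_mod_cast hy1
  push_cast at hy hn
  have := (tnum x y 1 0).cast_nonneg (α := ℝ)
  have := (tnum x y 0 1).cast_nonneg (α := ℝ)
  constructor <;> linarith

def normalizedLoss (α a b : ℝ) : ℝ := (a - 3 * b ^ 2) * (b + (1 - 2 * α)) ^ 2 + b ^ 2 * (1 - a)

lemma normalizedLoss_sub_normalizedLoss (α a a' b : ℝ) :
    normalizedLoss α a b - normalizedLoss α a' b =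
      (a - a') * ((1 - 2 * α) * (2 * b + 1 - 2 * α)) := by
  unfold normalizedLoss; ring

lemma normalizedLoss_ge_of_neg {α a b : ℝ} (hα : 1 / 2 < α) (hb : b < 0) (hba : -a ≤ b)
    (hab : a - b ≤ 2 * (1 - α)) (ha : a < 3 * b ^ 2) : 1 / 576 ≤ normalizedLoss α a b := by
  have hb₃ : b < -1 / 3 := by nlinarith
  have hmono : normalizedLoss α (-b) b ≤ normalizedLoss α a b := by
    have := normalizedLoss_sub_normalizedLoss α a (-b) b
    nlinarith [mul_nonneg (by linarith : 0 ≤ a + b)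
      (mul_nonneg (by linarith : 0 ≤ 2 * α - 1) (by linarith : 0 ≤ 2 * α - 1 - 2 * b))]
  have hsq : (b + (1 - 2 * α)) ^ 2 ≤ (1 + b) ^ 2 := by nlinarith
  have : 1 / 18 ≤ normalizedLoss α (-b) b := by
    calc (1 : ℝ) / 18 ≤ -b * (1 + b) * (1 + 3 * b + 3 * b ^ 2) := by
          nlinarith [sq_nonneg (b + 1 / 2),
            mul_nonneg (by linarith : (0 : ℝ) ≤ -b - 1 / 3) (by linarith : (0 : ℝ) ≤ 2 / 3 + b)]
      _ = (-b - 3 * b ^ 2) * (1 + b) ^ 2 + b ^ 2 * (1 - -b) := by ring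
      _ ≤ normalizedLoss α (-b) b := by
          unfold normalizedLoss
          nlinarith [mul_le_mul_of_nonpos_left hsq (by nlinarith : -b - 3 * b ^ 2 ≤ 0)]
  linarith

lemma normalizedLoss_ge_of_pos {α a b : ℝ} (hα : α ∈ Set.Ioo (1 / 2 : ℝ) (2 / 3)) (hb : 0 < b)
    (hba : b ≤ a) (hab : a + b ≤ 2 * α) (ha : a < 3 * b ^ 2) : 1 / 576 ≤ normalizedLoss α a b := by
  obtain ⟨hα₁, hα₂⟩ := hα
  have hb₃ : 1 / 3 < b := by nlinarith
  have hslope : (1 - 2 * α) * (2 * b + 1 - 2 * α) ≤ 0 :=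
    mul_nonpos_of_nonpos_of_nonneg (by linarith) (by linarith)
  rcases le_or_gt (3 * b ^ 2) (2 * α - b) with hsmall | hlarge
  · have hmono : normalizedLoss α (3 * b ^ 2) b ≤ normalizedLoss α a b := by
      have := normalizedLoss_sub_normalizedLoss α a (3 * b ^ 2) b
      nlinarith [mul_nonneg (by linarith : 0 ≤ 3 * b ^ 2 - a) (neg_nonneg.2 hslope)]
    have : 1 / 576 ≤ normalizedLoss α (3 * b ^ 2) b := by
      unfold normalizedLoss
      nlinarith
    linarith
  · have hmono : normalizedLoss α (2 * α - b) b ≤ normalizedLoss α a b := by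
      have := normalizedLoss_sub_normalizedLoss α a (2 * α - b) b
      nlinarith [mul_nonneg (by linarith : 0 ≤ 2 * α - b - a) (neg_nonneg.2 hslope)]
    set d := b + (1 - 2 * α) with hd
    have hd₁ : 1 / 6 ≤ d := by nlinarith
    have hbd : b ≤ 1 - d := by linarith
    have : 1 / 576 ≤ normalizedLoss α (2 * α - b) b := by
      have : normalizedLoss α (2 * α - b) b = d * (d * (1 - d) + b ^ 2 * (1 - 3 * d)) := by
        unfold normalizedLoss; rw [hd]; ring
      have hinner : 1 / 8 ≤ d * (1 - d) + b ^ 2 * (1 - 3 * d) := by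
        rcases le_or_gt d (1 / 3) with hd₃ | hd₃
        · nlinarith [mul_nonneg (sq_nonneg b) (by linarith : 0 ≤ 1 - 3 * d)]
        · have := mul_le_mul_of_nonpos_right (pow_le_pow_left₀ hb.le hbd 2)
            (by linarith : 1 - 3 * d ≤ 0)
          nlinarith [sq_nonneg (d - 1 / 2)]
      rw [this]
      nlinarith
    linarith

lemma normalizedLoss_ge {α ε a b : ℝ} (hα : α ∈ Set.Ioo (1 / 2 : ℝ) (2 / 3)) (hε : 0 < ε)
    (hε' : ε ≤ 1 / 4) (ha : ε ≤ a) (ha' : a ≤ 1 - ε) (hba : |b| ≤ a) (hab : a + b ≤ 2 * α)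
    (hab' : a - b ≤ 2 * (1 - α)) : ε ^ 2 * (α - 1 / 2) ^ 2 ≤ normalizedLoss α a b := by
  obtain ⟨hα₁, hα₂⟩ := hα
  obtain ⟨hba₁, hba₂⟩ := abs_le.1 hba
  have hβ : 0 < α - 1 / 2 := by linarith
  rcases le_or_gt (b ^ 2) ((α - 1 / 2) ^ 2) with hsmall | hlarge
  · have hbβ : |b| ≤ α - 1 / 2 := abs_le_of_sq_le_sq hsmall hβ.le
    have hb₂ : b ^ 2 ≤ (α - 1 / 2) * a := by
      rw [← sq_abs]; nlinarith [abs_nonneg b]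
    have hshift : (α - 1 / 2) ^ 2 ≤ (b + (1 - 2 * α)) ^ 2 := by
      have := (le_abs_self b).trans hbβ
      nlinarith [mul_nonneg (by linarith : 0 ≤ α - 1 / 2 - b)
        (by linarith : 0 ≤ 3 * (α - 1 / 2) - b)]
    have hhalf : a / 2 ≤ a - 3 * b ^ 2 := by nlinarith
    calc ε ^ 2 * (α - 1 / 2) ^ 2 ≤ a / 2 * (α - 1 / 2) ^ 2 := by
          gcongr; nlinarith
      _ ≤ (a - 3 * b ^ 2) * (b + (1 - 2 * α)) ^ 2 :=
          mul_le_mul hhalf hshift (sq_nonneg _) (by linarith)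
      _ ≤ normalizedLoss α a b :=
          le_add_of_nonneg_right (mul_nonneg (sq_nonneg b) (by linarith))
  rcases le_or_gt (3 * b ^ 2) a with hdom | hdom
  · calc ε ^ 2 * (α - 1 / 2) ^ 2 ≤ (α - 1 / 2) ^ 2 * ε := by
          nlinarith [mul_nonneg (sq_nonneg (α - 1 / 2))
            (mul_nonneg hε.le (by linarith : 0 ≤ 1 - ε))]
      _ ≤ b ^ 2 * (1 - a) := mul_le_mul hlarge.le (by linarith) hε.le (sq_nonneg b)
      _ ≤ normalizedLoss α a b :=
          le_add_of_nonneg_left (mul_nonneg (by linarith) (sq_nonneg _))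
  · have hF : 1 / 576 ≤ normalizedLoss α a b := by
      rcases lt_trichotomy b 0 with hb | hb | hb
      · exact normalizedLoss_ge_of_neg hα₁ hb hba₁ hab' hdom
      · rw [hb] at hlarge; nlinarith [sq_nonneg (α - 1 / 2)]
      · exact normalizedLoss_ge_of_pos ⟨hα₁, hα₂⟩ hb hba₂ hab hdom
    -- `1/576 = (1/4 · 1/6)²` bounds `(ε (α - 1/2))²`
    have : ε * (α - 1 / 2) ≤ 1 / 24 := by nlinarith
    nlinarith [mul_pos hε hβ]

def lossNumerator (α n A B : ℝ) : ℝ :=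
  (n * A - 3 * B ^ 2) * (B + (1 - 2 * α) * n) ^ 2 + n * B ^ 2 * (n - A)

lemma lossNumerator_eq {n : ℝ} (hn : n ≠ 0) (α A B : ℝ) :
    lossNumerator α n A B = n ^ 4 * normalizedLoss α (A / n) (B / n) := by
  unfold lossNumerator normalizedLoss
  field_simp

lemma lossNumerator_ge {α ε n t₀ t₁ : ℝ} (hα : α ∈ Set.Ioo (1 / 2 : ℝ) (2 / 3)) (hε : 0 < ε)
    (hε' : ε ≤ 1 / 4) (hn : 0 < n) (ht₀ : 0 ≤ t₀) (ht₁ : 0 ≤ t₁) (ht₀' : t₀ ≤ α * n)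
    (ht₁' : t₁ ≤ (1 - α) * n) (hA : ε * n ≤ t₀ + t₁) (hA' : t₀ + t₁ ≤ (1 - ε) * n) :
    ε ^ 2 * (α - 1 / 2) ^ 2 * n ^ 4 ≤ lossNumerator α n (t₀ + t₁) (t₀ - t₁) := by
  rw [lossNumerator_eq hn.ne', mul_comm]
  refine mul_le_mul_of_nonneg_left (normalizedLoss_ge hα hε hε' ?_ ?_ ?_ ?_ ?_) (by positivity)
  · rwa [le_div_iff₀ hn]
  · rwa [div_le_iff₀ hn]
  · rw [abs_div, abs_of_pos hn, div_le_div_iff_of_pos_right hn, abs_le]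
    constructor <;> linarith
  · rw [← add_div, div_le_iff₀ hn]; linarith
  · rw [← sub_div, div_le_iff₀ hn]; linarith

theorem stmt_16_general (α ε : ℝ) (hα : α ∈ Set.Ioo (1 / 2 : ℝ) (2 / 3))
    (hε : ε ∈ Set.Ioo (0 : ℝ) ((1 - α) / 2))
    (n : ℕ) (hn : 2 ≤ n) (s : ℝ) (hs : 0 < s)
    (y : Fin n → Fin 2)
    (hy : ((Finset.univ.filter fun v => y v = 0).card : ℝ) = α * n)
    (x : Fin n → Fin 2)
    (hA₁ : ε * n ≤ (tnum x y 0 0 : ℝ) + (tnum x y 1 1 : ℝ))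
    (hA₂ : (tnum x y 0 0 : ℝ) + (tnum x y 1 1 : ℝ) ≤ (1 - ε) * n) :
    0 < min (α * (2 - 3 * α) * ε ^ 2)
        (min ((α - 1 / 2) ^ 2 * (1 - (α - 1 / 2) ^ 2) * ε * (1 + ε) ^ 2)
          (ε ^ 2 * (α - 1 / 2) ^ 2)) ∧
    (1 / ((n : ℝ) ^ 3 * s ^ 2)) *
        (((n : ℝ) * ((tnum x y 0 0 : ℝ) + (tnum x y 1 1 : ℝ))
            - 3 * ((tnum x y 0 0 : ℝ) - (tnum x y 1 1 : ℝ)) ^ 2) *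
          (((tnum x y 0 0 : ℝ) - (tnum x y 1 1 : ℝ)) + (1 - 2 * α) * n) ^ 2
        + (n : ℝ) * ((tnum x y 0 0 : ℝ) - (tnum x y 1 1 : ℝ)) ^ 2 *
          ((n : ℝ) - ((tnum x y 0 0 : ℝ) + (tnum x y 1 1 : ℝ))))
      ≥ min (α * (2 - 3 * α) * ε ^ 2)
          (min ((α - 1 / 2) ^ 2 * (1 - (α - 1 / 2) ^ 2) * ε * (1 + ε) ^ 2)
            (ε ^ 2 * (α - 1 / 2) ^ 2)) * n / s ^ 2 := by
  obtain ⟨hα₁, hα₂⟩ := hα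
  obtain ⟨hε₀, hε₁⟩ := hε
  have hβ : 0 < α - 1 / 2 := by linarith
  have hβ' : 0 < 1 - (α - 1 / 2) ^ 2 := by nlinarith
  refine ⟨lt_min (mul_pos (mul_pos (by linarith) (by linarith)) (by positivity))
    (lt_min (by positivity) (by positivity)), ?_⟩
  have hn₀ : (0 : ℝ) < n := Nat.cast_pos.2 (by omega)
  obtain ⟨h₀₀, h₁₁⟩ := tnum_diag_le x y hy
  have hnum := lossNumerator_ge ⟨hα₁, hα₂⟩ hε₀ (by linarith) hn₀ (Nat.cast_nonneg _)
    (Nat.cast_nonneg _) h₀₀ h₁₁ hA₁ hA₂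
  calc _ ≤ ε ^ 2 * (α - 1 / 2) ^ 2 * n / s ^ 2 := by
        gcongr
        exact (min_le_right _ _).trans (min_le_right _ _)
    _ = 1 / ((n : ℝ) ^ 3 * s ^ 2) * (ε ^ 2 * (α - 1 / 2) ^ 2 * n ^ 4) := by
        field_simp
    _ ≤ 1 / ((n : ℝ) ^ 3 * s ^ 2) * lossNumerator α n (tnum x y 0 0 + tnum x y 1 1)
          (tnum x y 0 0 - tnum x y 1 1) := by
        gcongr

/-- Lower bound on `L_Σ` away from the true partition (Proposition 6.2): if
`α ∈ (1/2, 2/3)`, `ε ∈ (0, (1−α)/2)` and the overlap `A = t_{1,1} + t_{2,2}`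
satisfies `εn ≤ A ≤ (1−ε)n` (i.e. the overlap tuple lies in `B \ B_ε`), then
`L_Σ(x,y) = (1/(n³s²))[(nA − 3B²)(B + (1−2α)n)² + nB²(n − A)] ≥ C_{α,ε}·n/s²`,
with `C_{α,ε} = min{α(2−3α)ε², (α−1/2)²(1−(α−1/2)²)ε(1+ε)², ε²(α−1/2)²} > 0`. -/
theorem stmt_16 (α ε : ℝ) (hα : α ∈ Set.Ioo (1 / 2 : ℝ) (2 / 3))
    (hε : ε ∈ Set.Ioo (0 : ℝ) ((1 - α) / 2))
    (n : ℕ) (hn : 2 ≤ n) (s : ℝ) (hs : 0 < s) (hαn : ∃ m : ℕ, (m : ℝ) = α * n)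
    (y : Fin n → Fin 2)
    (hy : ((Finset.univ.filter fun v => y v = 0).card : ℝ) = α * n)
    (x : Fin n → Fin 2)
    (hA₁ : ε * n ≤ (tnum x y 0 0 : ℝ) + (tnum x y 1 1 : ℝ))
    (hA₂ : (tnum x y 0 0 : ℝ) + (tnum x y 1 1 : ℝ) ≤ (1 - ε) * n) :
    0 < min (α * (2 - 3 * α) * ε ^ 2)
        (min ((α - 1 / 2) ^ 2 * (1 - (α - 1 / 2) ^ 2) * ε * (1 + ε) ^ 2)
          (ε ^ 2 * (α - 1 / 2) ^ 2)) ∧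
    (1 / ((n : ℝ) ^ 3 * s ^ 2)) *
        (((n : ℝ) * ((tnum x y 0 0 : ℝ) + (tnum x y 1 1 : ℝ))
            - 3 * ((tnum x y 0 0 : ℝ) - (tnum x y 1 1 : ℝ)) ^ 2) *
          (((tnum x y 0 0 : ℝ) - (tnum x y 1 1 : ℝ)) + (1 - 2 * α) * n) ^ 2
        + (n : ℝ) * ((tnum x y 0 0 : ℝ) - (tnum x y 1 1 : ℝ)) ^ 2 *
          ((n : ℝ) - ((tnum x y 0 0 : ℝ) + (tnum x y 1 1 : ℝ))))
      ≥ min (α * (2 - 3 * α) * ε ^ 2)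
          (min ((α - 1 / 2) ^ 2 * (1 - (α - 1 / 2) ^ 2) * ε * (1 + ε) ^ 2)
            (ε ^ 2 * (α - 1 / 2) ^ 2)) * n / s ^ 2 :=
  stmt_16_general α ε hα hε n hn s hs y hy x hA₁ hA₂
end
end

section
/- Single-vertex increment of L_Σ near the true partition (Proposition 6.3): Let α > 1/2. There exists a constant C > 0 depending only on α such that the following holds for all integers n ≥ 2, all s > 0, and all ε ∈ (0, (2α−1)/2): if A₁, A₂, B₁, B₂ are real numbers with A₂ = A₁ + 1, |B₂ − B₁| = 1, n − 2εn ≤ A_i ≤ n and (2α−1)n − εn ≤ B_i ≤ (2α−1)n + εn for i = 1,2, then, writing L_i := (1/(n³s²))·[(nA_i − 3B_i²)(B_i + (1−2α)n)² + nB_i²(n − A_i)], one has | (L₁ − L₂) − (2α−1)²/s² | ≤ C·(ε + 1/n)/s². (In the model: if x, y₁, y₂ are 2-community assignments with y₁ obtained from y₂ by reassigning a single vertex so that the agreement count with x decreases by one, and both overlap tuples lie in B_ε, then L_Σ(x,y₁) − L_Σ(x,y₂) = (2α−1)²/s² + O(ε/s² + 1/(ns²)).) -/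
set_option maxHeartbeats 1000000


/-- Single-vertex increment of `L_Σ` near the true partition (Proposition 6.3):
for `α > 1/2` there is a constant `C > 0` depending only on `α` such that for all
`n ≥ 2`, `s > 0`, `ε ∈ (0, (2α−1)/2)`, and reals `A₁, A₂, B₁, B₂` with
`A₂ = A₁ + 1`, `|B₂ − B₁| = 1`, `n − 2εn ≤ Aᵢ ≤ n`,
`(2α−1)n − εn ≤ Bᵢ ≤ (2α−1)n + εn`, writing
`Lᵢ = (1/(n³s²))·[(nAᵢ − 3Bᵢ²)(Bᵢ + (1−2α)n)² + nBᵢ²(n − Aᵢ)]`,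
one has `|(L₁ − L₂) − (2α−1)²/s²| ≤ C·(ε + 1/n)/s²`. -/
theorem stmt_17 (α : ℝ) (hα : 1 / 2 < α) :
    ∃ C : ℝ, 0 < C ∧
      ∀ (n : ℕ), 2 ≤ n → ∀ (s : ℝ), 0 < s →
        ∀ (ε : ℝ), 0 < ε → ε < (2 * α - 1) / 2 →
          ∀ (A₁ A₂ B₁ B₂ : ℝ),
            A₂ = A₁ + 1 → |B₂ - B₁| = 1 →
            (n : ℝ) - 2 * ε * n ≤ A₁ → A₁ ≤ n →
            (n : ℝ) - 2 * ε * n ≤ A₂ → A₂ ≤ n →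
            (2 * α - 1) * n - ε * n ≤ B₁ → B₁ ≤ (2 * α - 1) * n + ε * n →
            (2 * α - 1) * n - ε * n ≤ B₂ → B₂ ≤ (2 * α - 1) * n + ε * n →
            |((1 / ((n : ℝ) ^ 3 * s ^ 2)) *
                ((n * A₁ - 3 * B₁ ^ 2) * (B₁ + (1 - 2 * α) * n) ^ 2
                  + n * B₁ ^ 2 * (n - A₁))
              - (1 / ((n : ℝ) ^ 3 * s ^ 2)) *
                ((n * A₂ - 3 * B₂ ^ 2) * (B₂ + (1 - 2 * α) * n) ^ 2
                  + n * B₂ ^ 2 * (n - A₂)))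
              - (2 * α - 1) ^ 2 / s ^ 2|
              ≤ C * (ε + 1 / n) / s ^ 2 := by
  have hα0 : 0 < α := by linarith
  refine ⟨120 * α ^ 2, by positivity, ?_⟩
  intro n hn s hs ε hε hε2 A₁ A₂ B₁ B₂ hA hB hA1l hA1u hA2l hA2u hB1l hB1u hB2l hB2u
  have hn0 : (0:ℝ) < n := by exact_mod_cast (by omega : 0 < n)
  set β : ℝ := 2 * α - 1 with hβdef
  clear_value β
  have hβ : 0 < β := by rw [hβdef]; linarith
  have hεn : 0 < ε * n := mul_pos hε hn0
  have hβn : 0 < β * n := mul_pos hβ hn0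
  have hb1 : |B₁ - β * n| ≤ ε * n := abs_le.mpr ⟨by linarith, by linarith⟩
  have hb2 : |B₂ - β * n| ≤ ε * n := abs_le.mpr ⟨by linarith, by linarith⟩
  have hb1' := abs_le.mp hb1
  have hb2' := abs_le.mp hb2
  have hB12 := abs_le.mp hB.le
  have hεβ : ε * n ≤ β / 2 * n := mul_le_mul_of_nonneg_right hε2.le hn0.le
  -- the four terms
  set T1 : ℝ := ((n:ℝ) * A₁ - 3 * B₁ ^ 2) * ((B₁ - B₂) * (B₁ + B₂ - 2 * β * n)) with hT1
  set T2 : ℝ := (-(n:ℝ) + 3 * (B₂ - B₁) * (B₂ + B₁)) * (B₂ - β * n) ^ 2 with hT2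
  set T3 : ℝ := (n:ℝ) * ((n:ℝ) - A₁) * ((B₁ - B₂) * (B₁ + B₂)) with hT3
  set T4 : ℝ := (n:ℝ) * (B₂ - β * n) * (B₂ + β * n) with hT4
  clear_value T1 T2 T3 T4
  -- bound T1
  have hB1sq : B₁ ^ 2 ≤ 9 / 4 * β ^ 2 * n ^ 2 := by
    have h := sq_le_sq' (by linarith : -(3 / 2 * (β * n)) ≤ B₁)
      (by linarith : B₁ ≤ 3 / 2 * (β * n))
    linarith [h]
  have hA1l' : (n:ℝ) ^ 2 - β * n ^ 2 ≤ (n:ℝ) * A₁ := by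
    have h1 := mul_le_mul_of_nonneg_left hA1l hn0.le
    have h2 := mul_le_mul_of_nonneg_right hεβ hn0.le
    linarith [h1, h2]
  have f1 : |(n:ℝ) * A₁ - 3 * B₁ ^ 2| ≤ 8 * (1 + β) ^ 2 * n ^ 2 := by
    rw [abs_le]
    constructor
    · linarith [hB1sq, hA1l', sq_nonneg (n:ℝ), mul_nonneg hβ.le (sq_nonneg (n:ℝ)),
        mul_nonneg (mul_nonneg hβ.le hβ.le) (sq_nonneg (n:ℝ))]
    · linarith [sq_nonneg B₁, mul_le_mul_of_nonneg_left hA1u hn0.le,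
        sq_nonneg (n:ℝ), mul_nonneg hβ.le (sq_nonneg (n:ℝ)),
        mul_nonneg (mul_nonneg hβ.le hβ.le) (sq_nonneg (n:ℝ))]
  have f2 : |B₁ - B₂| = 1 := by rw [abs_sub_comm]; exact hB
  have f3 : |B₁ + B₂ - 2 * β * n| ≤ 2 * (ε * n) := by
    rw [abs_le]; constructor <;> linarith
  have h1 : |T1| ≤ 16 * (1 + β) ^ 2 * (ε * n ^ 3) := by
    rw [hT1, abs_mul, abs_mul, f2, one_mul]
    have hm := mul_le_mul f1 f3 (abs_nonneg _) (by positivity)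
    exact hm.trans (le_of_eq (by ring))
  -- bound T2
  have hsumB : |(B₂ - B₁) * (B₂ + B₁)| ≤ 3 * (β * n) := by
    rw [abs_mul, hB, one_mul, abs_le]
    constructor <;> linarith
  have hsumB' := abs_le.mp hsumB
  have g1 : |(-(n:ℝ) + 3 * (B₂ - B₁) * (B₂ + B₁))| ≤ (1 + 9 * β) * n := by
    rw [abs_le]
    constructor <;> linarith [hsumB'.1, hsumB'.2]
  have g2 : (B₂ - β * n) ^ 2 ≤ (β / 2) * (ε * n ^ 2) := by
    have p := mul_nonneg (by linarith : (0:ℝ) ≤ ε * n - (B₂ - β * n))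
      (by linarith : (0:ℝ) ≤ ε * n + (B₂ - β * n))
    have q := mul_le_mul_of_nonneg_left hεβ hεn.le
    linarith [p, q]
  have h2 : |T2| ≤ ((1 + 9 * β) * β / 2) * (ε * n ^ 3) := by
    rw [hT2, abs_mul, abs_of_nonneg (sq_nonneg (B₂ - β * n))]
    have hm := mul_le_mul g1 g2 (sq_nonneg _) (by positivity)
    exact hm.trans (le_of_eq (by ring))
  -- bound T3
  have h3 : |T3| ≤ 6 * β * (ε * n ^ 3) := by
    rw [hT3, abs_mul, abs_mul]
    rw [abs_of_nonneg hn0.le, abs_of_nonneg (by linarith : (0:ℝ) ≤ (n:ℝ) - A₁)]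
    have hX : |(B₁ - B₂) * (B₁ + B₂)| ≤ 3 * (β * n) := by
      rw [abs_mul, f2, one_mul, abs_le]
      constructor <;> linarith
    have hm := mul_le_mul (mul_le_mul le_rfl (by linarith : (n:ℝ) - A₁ ≤ 2 * (ε * n))
      (by linarith) hn0.le) hX (abs_nonneg _) (by positivity)
    exact hm.trans (le_of_eq (by ring))
  -- bound T4
  have h4 : |T4| ≤ 3 * β * (ε * n ^ 3) := by
    rw [hT4, abs_mul, abs_mul, abs_of_nonneg hn0.le]
    have fB : |B₂ + β * n| ≤ 3 * (β * n) := by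
      rw [abs_le]; constructor <;> linarith
    have hm := mul_le_mul (mul_le_mul le_rfl hb2 (abs_nonneg _) hn0.le) fB
      (abs_nonneg _) (by positivity)
    exact hm.trans (le_of_eq (by ring))
  -- total
  set E₁ : ℝ := ((n:ℝ) * A₁ - 3 * B₁ ^ 2) * (B₁ + (1 - 2 * α) * n) ^ 2 + n * B₁ ^ 2 * (n - A₁) with hE1
  set E₂ : ℝ := ((n:ℝ) * A₂ - 3 * B₂ ^ 2) * (B₂ + (1 - 2 * α) * n) ^ 2 + n * B₂ ^ 2 * (n - A₂) with hE2
  clear_value E₁ E₂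
  have hdecomp : E₁ - E₂ - β ^ 2 * n ^ 3 = T1 + T2 + T3 + T4 := by
    rw [hE1, hE2, hA, hT1, hT2, hT3, hT4, hβdef]; ring
  have hc : 16 * (1 + β) ^ 2 + (1 + 9 * β) * β / 2 + 6 * β + 3 * β ≤ 120 * α ^ 2 := by
    rw [hβdef]; clear * - hα hα0; nlinarith [sq_nonneg α, sq_nonneg (α - 1), mul_pos hα0 hα0]
  have hsum : |E₁ - E₂ - β ^ 2 * n ^ 3| ≤ 120 * α ^ 2 * (ε * n ^ 3) := by
    rw [hdecomp]
    calc |T1 + T2 + T3 + T4| ≤ |T1 + T2 + T3| + |T4| := abs_add_le _ _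
      _ ≤ (|T1| + |T2| + |T3|) + |T4| := by
          have := abs_add_three T1 T2 T3
          linarith
      _ ≤ 16 * (1 + β) ^ 2 * (ε * n ^ 3) + ((1 + 9 * β) * β / 2) * (ε * n ^ 3)
          + 6 * β * (ε * n ^ 3) + 3 * β * (ε * n ^ 3) := by linarith
      _ = (16 * (1 + β) ^ 2 + (1 + 9 * β) * β / 2 + 6 * β + 3 * β) * (ε * n ^ 3) := by ring
      _ ≤ 120 * α ^ 2 * (ε * n ^ 3) :=
          mul_le_mul_of_nonneg_right hc (by positivity)
  -- reduce goal
  have hn3s : (0:ℝ) < (n:ℝ) ^ 3 * s ^ 2 := by positivity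
  have hrw : (1 / ((n : ℝ) ^ 3 * s ^ 2)) * E₁ - (1 / ((n : ℝ) ^ 3 * s ^ 2)) * E₂
      - β ^ 2 / s ^ 2 = (E₁ - E₂ - β ^ 2 * n ^ 3) / ((n:ℝ) ^ 3 * s ^ 2) := by
    field_simp
  rw [hrw, abs_div, abs_of_pos hn3s]
  calc |E₁ - E₂ - β ^ 2 * n ^ 3| / ((n:ℝ) ^ 3 * s ^ 2)
      ≤ (120 * α ^ 2 * (ε * n ^ 3)) / ((n:ℝ) ^ 3 * s ^ 2) := by
        exact (div_le_div_iff_of_pos_right hn3s).mpr hsum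
    _ = 120 * α ^ 2 * ε / s ^ 2 := by field_simp
    _ ≤ 120 * α ^ 2 * (ε + 1 / n) / s ^ 2 := by
        have h1n : (0:ℝ) ≤ 1 / n := by positivity
        have := mul_le_mul_of_nonneg_left (by linarith : ε ≤ ε + 1 / n)
          (by positivity : (0:ℝ) ≤ 120 * α ^ 2)
        exact (div_le_div_iff_of_pos_right (by positivity : (0:ℝ) < s ^ 2)).mpr this
end
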